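/- arXiv:1811.10257 — 12 statements merged into one kernel-verified Lean document; each statement's English description precedes it below -/
import Mathlib

section
/- V_T(S) = ∅ if and only if the vector (0_n, −1) ∈ ℝⁿ⁺¹ belongs to the convex cone generated by the vectors (t − s, ‖t‖² − ‖s‖²) for s ∈ S and t ∈ T \ S. -/
open Finset Metric
open scoped Classical

/-- The multipoint (higher-order) Voronoi cell of `S` within the set of sites `T`. -/
def vcell {n : ℕ} (T S : Finset (EuclideanSpace ℝ (Fin n))) :
    Set (EuclideanSpace ℝ (Fin n)) :=
  {x | ∀ s ∈ S, ∀ t ∈ T \ S, dist x s ≤ dist x t}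

/-
A point `x` lies in `V_T(S)` iff `2⟪x, t - s⟫ ≤ ‖t‖² - ‖s‖²` for all `s ∈ S`, `t ∈ T \ S`, i.e.
iff the functional `(y, r) ↦ r - 2⟪x, y⟫` is nonnegative on every generator
`(t - s, ‖t‖² - ‖s‖²)` and negative at `(0, -1)`; conversely, by Riesz, every functional with these
two properties is a positive multiple of one of this form. So the theorem is Farkas' lemma for a
finitely generated cone. Farkas' lemma holds for it because such a cone is closed: by
Carathéodory's theorem for cones it is a finite union of cones over linearly independent families,
and each of those is the image of the closed orthant under an injective linear map.
-/

open scoped RealInnerProductSpace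

theorem Finset.exists_sub_mul_nonneg_eq_zero {ι : Type*} {s : Finset ι} {c g : ι → ℝ}
    (hc : ∀ i ∈ s, 0 ≤ c i) (hg : ∃ i ∈ s, 0 < g i) :
    ∃ μ : ℝ, ∃ j ∈ s, (∀ i ∈ s, 0 ≤ c i - μ * g i) ∧ c j - μ * g j = 0 := by
  obtain ⟨j, hj, hmin⟩ := (s.filter (0 < g ·)).exists_min_image (fun i => c i / g i)
    (by simpa [Finset.Nonempty] using hg)
  rw [Finset.mem_filter] at hj
  refine ⟨c j / g j, j, hj.1, fun i hi => ?_, by field_simp [hj.2.ne']; ring⟩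
  rcases lt_or_ge 0 (g i) with hgi | hgi
  · have := hmin i (Finset.mem_filter.mpr ⟨hi, hgi⟩)
    rw [le_div_iff₀ hgi] at this
    linarith
  · nlinarith [div_nonneg (hc j hj.1) hj.2.le, hc i hi]

namespace PointedCone

variable {ι E : Type*} [AddCommGroup E] [Module ℝ E] {v : ι → E} {s : Finset ι} {x : E}

theorem sum_smul_mem_hull_image {c : ι → ℝ} (hc : ∀ i ∈ s, 0 ≤ c i) :
    ∑ i ∈ s, c i • v i ∈ hull ℝ (v '' s) :=
  Submodule.sum_mem _ fun i hi =>
    smul_mem _ (hc i hi) (subset_hull (Set.mem_image_of_mem v hi))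

theorem mem_hull_image_iff_exists_nonneg :
    x ∈ hull ℝ (v '' s) ↔ ∃ c : ι → ℝ, 0 ≤ c ∧ ∑ i ∈ s, c i • v i = x := by
  refine ⟨fun hx => ?_, fun ⟨c, hc, hx⟩ => hx ▸ sum_smul_mem_hull_image fun i _ => hc i⟩
  obtain ⟨c, rfl⟩ := (Submodule.mem_span_image_finset_iff_exists_fun' _).mp hx
  exact ⟨fun i => c i, fun i => (c i).2, by simp⟩

theorem exists_mem_hull_image_erase [DecidableEq ι] (h : ¬ LinearIndepOn ℝ v s)
    (hx : x ∈ hull ℝ (v '' s)) : ∃ j ∈ s, x ∈ hull ℝ (v '' (s.erase j)) := by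
  obtain ⟨c, hc, rfl⟩ := mem_hull_image_iff_exists_nonneg.mp hx
  obtain ⟨g, hg, k, hk, hgk⟩ := not_linearIndepOn_finset_iff.mp h
  obtain ⟨g, hg, hpos⟩ : ∃ g : ι → ℝ, ∑ i ∈ s, g i • v i = 0 ∧ ∃ i ∈ s, 0 < g i := by
    rcases hgk.lt_or_gt with hneg | hpos
    · exact ⟨-g, by simp [neg_smul, hg], k, hk, by simpa using hneg⟩
    · exact ⟨g, hg, k, hk, hpos⟩
  obtain ⟨μ, j, hj, hnonneg, hzero⟩ :=
    Finset.exists_sub_mul_nonneg_eq_zero (fun i _ => hc i) hpos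
  refine ⟨j, hj, ?_⟩
  have hsum : ∑ i ∈ s, c i • v i = ∑ i ∈ s.erase j, (c i - μ * g i) • v i := by
    rw [Finset.sum_erase _ (by rw [hzero, zero_smul])]
    simp only [sub_smul, mul_smul, Finset.sum_sub_distrib, ← Finset.smul_sum, hg, smul_zero,
      sub_zero]
  rw [hsum]
  exact sum_smul_mem_hull_image fun i hi => hnonneg i (Finset.mem_of_mem_erase hi)

theorem exists_linearIndepOn_mem_hull_image (hx : x ∈ hull ℝ (v '' s)) :
    ∃ t ⊆ s, LinearIndepOn ℝ v t ∧ x ∈ hull ℝ (v '' t) := by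
  classical
  induction s using Finset.strongInduction with
  | H s ih =>
    by_cases h : LinearIndepOn ℝ v s
    · exact ⟨s, subset_rfl, h, hx⟩
    · obtain ⟨j, hj, hxj⟩ := exists_mem_hull_image_erase h hx
      obtain ⟨t, hts, ht, hxt⟩ := ih _ (Finset.erase_ssubset hj) hxj
      exact ⟨t, hts.trans (Finset.erase_subset j s), ht, hxt⟩

variable [TopologicalSpace E] [IsTopologicalAddGroup E] [ContinuousSMul ℝ E] [T2Space E]

theorem isClosed_hull_image_of_linearIndepOn (h : LinearIndepOn ℝ v s) :
    IsClosed (hull ℝ (v '' s) : Set E) := by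
  let f := Fintype.linearCombination ℝ (fun i : s => v i)
  have hf : (hull ℝ (v '' s) : Set E) = f '' Set.Ici 0 := by
    ext x
    rw [SetLike.mem_coe, Submodule.mem_span_image_finset_iff_exists_fun]
    constructor
    · rintro ⟨c, rfl⟩
      exact ⟨fun i => c i, fun i => (c i).2, by simp [f, Fintype.linearCombination_apply]⟩
    · rintro ⟨c, hc, rfl⟩
      exact ⟨fun i => ⟨c i, hc i⟩, by simp [f, Fintype.linearCombination_apply]⟩
  rw [hf]
  refine (LinearMap.isClosedEmbedding_of_injective ?_).isClosedMap _ isClosed_Ici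
  exact LinearMap.ker_eq_bot'.mpr fun c hc => funext <| Fintype.linearIndependent_iff.mp h c <| by
    simpa [f, Fintype.linearCombination_apply] using hc

theorem isClosed_hull_image : IsClosed (hull ℝ (v '' s) : Set E) := by
  classical
  have : (hull ℝ (v '' s) : Set E) =
      ⋃ (t : Finset ι)
        (_ : t ∈ s.powerset.filter fun t : Finset ι => LinearIndepOn ℝ v (t : Set ι)),
        (hull ℝ (v '' t) : Set E) := by
    refine subset_antisymm (fun x hx => ?_) (Set.iUnion₂_subset fun t ht => ?_)
    · obtain ⟨t, hts, ht, hxt⟩ := exists_linearIndepOn_mem_hull_image hx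
      exact Set.mem_biUnion (by simp [hts, ht]) hxt
    · rw [Finset.mem_filter, Finset.mem_powerset] at ht
      exact Submodule.span_mono (Set.image_mono (Finset.coe_subset.mpr ht.1))
  rw [this]
  exact isClosed_biUnion_finset fun t ht =>
    isClosed_hull_image_of_linearIndepOn (Finset.mem_filter.mp ht).2

variable [LocallyConvexSpace ℝ E]

theorem mem_hull_image_iff_forall_dual :
    x ∈ hull ℝ (v '' s) ↔ ∀ f : StrongDual ℝ E, (∀ i ∈ s, 0 ≤ f (v i)) → 0 ≤ f x := by
  refine ⟨fun hx f hf => ?_, fun h => ?_⟩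
  · obtain ⟨c, hc, rfl⟩ := mem_hull_image_iff_exists_nonneg.mp hx
    simpa only [map_sum, map_smul, smul_eq_mul] using
      Finset.sum_nonneg fun i hi => mul_nonneg (hc i) (hf i hi)
  · by_contra hx
    obtain ⟨f, hf, hfx⟩ :=
      ProperCone.hyperplane_separation_point ⟨hull ℝ (v '' s), isClosed_hull_image⟩ hx
    exact (h f fun i hi => hf _ (subset_hull (Set.mem_image_of_mem v hi))).not_gt hfx

end PointedCone

section Bisector

variable {E : Type*} [NormedAddCommGroup E] [InnerProductSpace ℝ E]

theorem dist_le_dist_iff_two_inner_le (x s t : E) :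
    dist x s ≤ dist x t ↔ 2 * ⟪x, t - s⟫ ≤ ‖t‖ ^ 2 - ‖s‖ ^ 2 := by
  rw [dist_eq_norm, dist_eq_norm, ← sq_le_sq₀ (norm_nonneg _) (norm_nonneg _),
    norm_sub_sq_real, norm_sub_sq_real, inner_sub_right]
  constructor <;> intro h <;> linarith

def bisectorVector (p : E × E) : E × ℝ := (p.2 - p.1, ‖p.2‖ ^ 2 - ‖p.1‖ ^ 2)

theorem StrongDual.apply_mk (f : StrongDual ℝ (E × ℝ)) (y : E) (r : ℝ) :
    f (y, r) = f (y, 0) + r * f (0, 1) := by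
  rw [← smul_eq_mul, ← map_smul, ← map_add]
  simp

theorem exists_forall_dist_le_iff [CompleteSpace E] (P : Set (E × E)) :
    (∃ x : E, ∀ p ∈ P, dist x p.1 ≤ dist x p.2) ↔
      ∃ f : StrongDual ℝ (E × ℝ), (∀ p ∈ P, 0 ≤ f (bisectorVector p)) ∧ f (0, -1) < 0 := by
  simp only [dist_le_dist_iff_two_inner_le]
  constructor
  · rintro ⟨x, hx⟩
    refine ⟨.snd ℝ E ℝ - (2 : ℝ) • (innerSL ℝ x).comp (.fst ℝ E ℝ), fun p hp => ?_, by simp⟩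
    simpa [bisectorVector] using hx p hp
  · rintro ⟨f, hf, hneg⟩
    set c := f (0, 1)
    have hc : 0 < c := by
      have : f (0, -1) = -c := by rw [← map_neg, Prod.neg_mk, neg_zero]
      linarith
    set g := f.comp (.inl ℝ E ℝ)
    refine ⟨-(2 * c)⁻¹ • (InnerProductSpace.toDual ℝ E).symm g, fun p hp => ?_⟩
    have hp := hf p hp
    rw [bisectorVector, StrongDual.apply_mk] at hp
    rw [real_inner_smul_left, InnerProductSpace.toDual_symm_apply]
    have hg : g (p.2 - p.1) = f (p.2 - p.1, 0) := rfl
    rw [hg, show 2 * (-(2 * c)⁻¹ * f (p.2 - p.1, 0)) = -f (p.2 - p.1, 0) / c by field_simp,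
      div_le_iff₀ hc]
    linarith

end Bisector

theorem stmt_1_general {n : ℕ} (T S : Finset (EuclideanSpace ℝ (Fin n))) :
    vcell T S = ∅ ↔
      ∃ lam : EuclideanSpace ℝ (Fin n) → EuclideanSpace ℝ (Fin n) → ℝ,
        (∀ s t, 0 ≤ lam s t) ∧
        (∑ s ∈ S, ∑ t ∈ T \ S, lam s t •
            ((t - s, ‖t‖ ^ 2 - ‖s‖ ^ 2) : EuclideanSpace ℝ (Fin n) × ℝ)) =
          ((0, -1) : EuclideanSpace ℝ (Fin n) × ℝ) := by
  have hcell : vcell T S = ∅ ↔ ((0, -1) : EuclideanSpace ℝ (Fin n) × ℝ) ∈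
      PointedCone.hull ℝ (bisectorVector '' ↑(S ×ˢ (T \ S))) := by
    have hne : (vcell T S).Nonempty ↔
        ∃ x, ∀ p ∈ ((S ×ˢ (T \ S) : Finset (_ × _)) : Set (_ × _)), dist x p.1 ≤ dist x p.2 :=
      exists_congr fun x =>
        ⟨fun h p hp => h _ (Finset.mem_product.mp hp).1 _ (Finset.mem_product.mp hp).2,
          fun h s hs t ht => h (s, t) (Finset.mem_product.mpr ⟨hs, ht⟩)⟩
    rw [PointedCone.mem_hull_image_iff_forall_dual, ← Set.not_nonempty_iff_eq_empty, hne,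
      exists_forall_dist_le_iff]
    push Not
    rfl
  rw [hcell, PointedCone.mem_hull_image_iff_exists_nonneg]
  constructor
  · rintro ⟨c, hc, hsum⟩
    exact ⟨fun s t => c (s, t), fun s t => hc _, by rw [← hsum, Finset.sum_product]; rfl⟩
  · rintro ⟨lam, hlam, hsum⟩
    exact ⟨fun p => lam p.1 p.2, fun p => hlam _ _, by rw [Finset.sum_product]; exact hsum⟩

theorem stmt_1 {n : ℕ} (T S : Finset (EuclideanSpace ℝ (Fin n)))
    (hS : S.Nonempty) (hST : S ⊂ T) :
    vcell T S = ∅ ↔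
      ∃ lam : EuclideanSpace ℝ (Fin n) → EuclideanSpace ℝ (Fin n) → ℝ,
        (∀ s t, 0 ≤ lam s t) ∧
        (∑ s ∈ S, ∑ t ∈ T \ S, lam s t •
            ((t - s, ‖t‖ ^ 2 - ‖s‖ ^ 2) : EuclideanSpace ℝ (Fin n) × ℝ)) =
          ((0, -1) : EuclideanSpace ℝ (Fin n) × ℝ) :=
  stmt_1_general T S
end

section
/- For t ∈ T, the cell V_T(T \ {t}) is nonempty if and only if t is an extreme point of the convex hull of T. -/
/-!
A point `x` is at least as close to `s` as to `t` iff `‖s - t‖² ≤ 2⟪x - t, s - t⟫`. So if `x` lies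
in the cell, the open half-space `⟪x - t, · - t⟫ > 0` contains every other site but not `t`, and
hence separates `t` from their convex hull. Conversely, a separating direction `v` with
`⟪v, s - t⟫ ≥ δ > 0` for all other sites `s` gives the point `t + r • v` of the cell for `r` large.
-/

open Finset Metric
open scoped Classical

open scoped RealInnerProductSpace

section InnerProductSpace

variable {E : Type*} [NormedAddCommGroup E] [InnerProductSpace ℝ E]

theorem dist_le_dist_iff_sq_norm_sub_le_two_inner (x s t : E) :
    dist x s ≤ dist x t ↔ ‖s - t‖ ^ 2 ≤ 2 * ⟪x - t, s - t⟫ := by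
  have hxs : ‖x - s‖ ^ 2 = ‖x - t‖ ^ 2 - 2 * ⟪x - t, s - t⟫ + ‖s - t‖ ^ 2 := by
    rw [← norm_sub_sq_real, sub_sub_sub_cancel_right]
  rw [dist_eq_norm, dist_eq_norm, ← sq_le_sq₀ (norm_nonneg _) (norm_nonneg _), hxs]
  constructor <;> intro h <;> linarith

theorem notMem_convexHull_of_forall_dist_le {S : Set E} {t x : E} (htS : t ∉ S)
    (hx : ∀ s ∈ S, dist x s ≤ dist x t) : t ∉ convexHull ℝ S := by
  have hS : S ⊆ {y | ⟪x - t, t⟫ < ⟪x - t, y⟫} := by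
    intro s hs
    have hst : 0 < ‖s - t‖ := norm_pos_iff.mpr (sub_ne_zero.mpr (ne_of_mem_of_not_mem hs htS))
    have h := (dist_le_dist_iff_sq_norm_sub_le_two_inner x s t).mp (hx s hs)
    rw [inner_sub_right] at h
    show ⟪x - t, t⟫ < ⟪x - t, s⟫
    nlinarith
  have hconv : Convex ℝ {y | ⟪x - t, t⟫ < ⟪x - t, y⟫} :=
    convex_halfSpace_gt (innerₛₗ ℝ (x - t)).isLinear _
  exact fun ht => lt_irrefl _ (show ⟪x - t, t⟫ < ⟪x - t, t⟫ from convexHull_min hS hconv ht)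

theorem exists_forall_le_inner_sub_of_notMem [CompleteSpace E] {C : Set E} {t : E}
    (hconv : Convex ℝ C) (hclosed : IsClosed C) (ht : t ∉ C) :
    ∃ v : E, ∃ δ > 0, ∀ y ∈ C, δ ≤ ⟪v, y - t⟫ := by
  obtain ⟨f, u, hft, hfC⟩ := geometric_hahn_banach_point_closed hconv hclosed ht
  refine ⟨(InnerProductSpace.toDual ℝ E).symm f, u - f t, sub_pos.mpr hft, fun y hy => ?_⟩
  rw [inner_sub_right, InnerProductSpace.toDual_symm_apply, InnerProductSpace.toDual_symm_apply]
  linarith [hfC y hy]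

theorem exists_forall_dist_le_of_notMem_convexHull [CompleteSpace E] {S : Finset E} {t : E}
    (ht : t ∉ convexHull ℝ (S : Set E)) : ∃ x, ∀ s ∈ S, dist x s ≤ dist x t := by
  obtain ⟨v, δ, hδ, hv⟩ := exists_forall_le_inner_sub_of_notMem (convex_convexHull ℝ _)
    (S.finite_toSet.isClosed_convexHull ℝ) ht
  -- Walk from `t` along `v` far enough that every bisector with a site of `S` is crossed.
  set R := ∑ s ∈ S, ‖s - t‖ ^ 2
  refine ⟨t + (R / (2 * δ)) • v, fun s hs => ?_⟩
  have hR : ‖s - t‖ ^ 2 ≤ R :=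
    single_le_sum (f := fun s => ‖s - t‖ ^ 2) (fun s _ => by positivity) hs
  have hvs : δ ≤ ⟪v, s - t⟫ := hv s (subset_convexHull ℝ _ hs)
  rw [dist_le_dist_iff_sq_norm_sub_le_two_inner, add_sub_cancel_left, real_inner_smul_left]
  calc ‖s - t‖ ^ 2 ≤ R := hR
    _ = 2 * (R / (2 * δ) * δ) := by field_simp
    _ ≤ 2 * (R / (2 * δ) * ⟪v, s - t⟫) := by gcongr

theorem exists_forall_dist_le_iff_notMem_convexHull [CompleteSpace E] {S : Finset E} {t : E}
    (htS : t ∉ S) : (∃ x, ∀ s ∈ S, dist x s ≤ dist x t) ↔ t ∉ convexHull ℝ (S : Set E) :=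
  ⟨fun ⟨_, hx⟩ => notMem_convexHull_of_forall_dist_le (by exact_mod_cast htS) hx,
    exists_forall_dist_le_of_notMem_convexHull⟩

end InnerProductSpace

theorem vcell_erase {n : ℕ} {T : Finset (EuclideanSpace ℝ (Fin n))} {t : EuclideanSpace ℝ (Fin n)}
    (ht : t ∈ T) : vcell T (T.erase t) = {x | ∀ s ∈ T.erase t, dist x s ≤ dist x t} := by
  simp only [vcell, sdiff_erase_self ht, mem_singleton, forall_eq]

theorem stmt_3_general {n : ℕ} (T : Finset (EuclideanSpace ℝ (Fin n)))
    (t : EuclideanSpace ℝ (Fin n)) (ht : t ∈ T) :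
    (vcell T (T.erase t)).Nonempty ↔
      t ∉ convexHull ℝ (↑(T.erase t) : Set (EuclideanSpace ℝ (Fin n))) := by
  rw [vcell_erase ht]
  exact exists_forall_dist_le_iff_notMem_convexHull (T.notMem_erase t)

theorem stmt_3 {n : ℕ} (T : Finset (EuclideanSpace ℝ (Fin n)))
    (hT : 2 ≤ T.card) (t : EuclideanSpace ℝ (Fin n)) (ht : t ∈ T) :
    (vcell T (T.erase t)).Nonempty ↔
      t ∉ convexHull ℝ (↑(T.erase t) : Set (EuclideanSpace ℝ (Fin n))) :=
  stmt_3_general T t ht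
end

section
/- If the convex hull of S contains some point of T \ S, then V_T(S) is empty. -/
open Finset Metric
open scoped Classical

/-!
A point `x` of `V_T(S)` and a site `t ∈ T \ S` give a closed ball around `x` through `t` that
contains `S`, hence `conv S`. In a strictly convex space `t` is an extreme point of that ball, so
it is an extreme point of `conv S` too, and extreme points of a convex hull belong to the set
itself: `t ∈ S`, a contradiction.
-/

section StrictConvexSpace

variable {E : Type*} [NormedAddCommGroup E] [NormedSpace ℝ E] [StrictConvexSpace ℝ E]

theorem mem_extremePoints_closedBall_dist (x t : E) :
    t ∈ Set.extremePoints ℝ (closedBall x (dist x t)) := by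
  rcases eq_or_ne x t with rfl | hxt
  · simp
  · exact StrictConvexSpace.sphere_subset_extremePoints_closedBall x (dist_ne_zero.2 hxt)
      (mem_sphere'.2 rfl)

theorem mem_of_mem_convexHull_of_forall_dist_le {A : Set E} {x t : E}
    (hA : ∀ s ∈ A, dist x s ≤ dist x t) (ht : t ∈ convexHull ℝ A) : t ∈ A := by
  have hball : convexHull ℝ A ⊆ closedBall x (dist x t) :=
    convexHull_min (fun s hs ↦ mem_closedBall'.2 (hA s hs)) (convex_closedBall x _)
  exact extremePoints_convexHull_subset <|
    inter_extremePoints_subset_extremePoints_of_subset hball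
      ⟨ht, mem_extremePoints_closedBall_dist x t⟩

end StrictConvexSpace

theorem stmt_4_general {n : ℕ} (T S : Finset (EuclideanSpace ℝ (Fin n)))
    (h : ∃ t ∈ T \ S, t ∈ convexHull ℝ (↑S : Set (EuclideanSpace ℝ (Fin n)))) :
    vcell T S = ∅ := by
  obtain ⟨t, htTS, htS⟩ := h
  refine Set.eq_empty_of_forall_notMem fun x hx ↦ (Finset.mem_sdiff.1 htTS).2 ?_
  exact mem_of_mem_convexHull_of_forall_dist_le (fun s hs ↦ hx s hs t htTS) htS

theorem stmt_4 {n : ℕ} (T S : Finset (EuclideanSpace ℝ (Fin n)))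
    (hS : S.Nonempty) (hST : S ⊂ T)
    (h : ∃ t ∈ T \ S, t ∈ convexHull ℝ (↑S : Set (EuclideanSpace ℝ (Fin n)))) :
    vcell T S = ∅ :=
  stmt_4_general T S h
end

section
/- V_T(S) is nonempty if and only if there exists a closed Euclidean ball B containing S whose interior contains no point of T \ S. -/
open Finset Metric
open scoped Classical

theorem stmt_5 {n : ℕ} (T S : Finset (EuclideanSpace ℝ (Fin n)))
    (hS : S.Nonempty) (hST : S ⊂ T) :
    (vcell T S).Nonempty ↔
      ∃ (c : EuclideanSpace ℝ (Fin n)) (r : ℝ),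
        (↑S : Set (EuclideanSpace ℝ (Fin n))) ⊆ closedBall c r ∧
        ∀ t ∈ T \ S, t ∉ ball c r := by
  constructor
  · rintro ⟨x, hx⟩
    obtain ⟨s₀, hs₀, hmax⟩ := S.exists_max_image (fun s => dist x s) hS
    refine ⟨x, dist x s₀, ?_, ?_⟩
    · intro s hs
      simp only [mem_closedBall, dist_comm]
      exact hmax s hs
    · intro t ht
      simp only [mem_ball, dist_comm, not_lt]
      exact hx s₀ hs₀ t ht
  · rintro ⟨c, r, hSb, hTb⟩
    refine ⟨c, fun s hs t ht => ?_⟩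
    have h1 : dist c s ≤ r := by
      have := hSb (Finset.mem_coe.mpr hs)
      simpa [dist_comm] using this
    have h2 : r ≤ dist c t := by
      have := hTb t ht
      simpa [dist_comm, not_lt] using this
    linarith
end

section
/- If n ≥ 2 and |T| ≤ 3, then every nonempty cell V_T(S) is unbounded. -/
open Finset Metric
open scoped Classical

/-!
The condition `dist x s ≤ dist x t` cuts out a half-space with normal `t - s`, so the cell is an
intersection of at most `|S| * |T \ S| ≤ 2 ≤ n` half-spaces. Any `n` vectors of `ℝⁿ` admit a
nonzero `v` with nonpositive inner product against each of them (take `v` orthogonal to all but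
one and fix its sign on the last), and then the ray `x + τ • v`, `τ ≥ 0`, from any point `x` of
the cell stays in the cell.
-/

open scoped RealInnerProductSpace

section InnerProductSpace

variable {E : Type*} [NormedAddCommGroup E] [InnerProductSpace ℝ E]

theorem not_isBounded_of_ray_subset {s : Set E} {x v : E} (hv : v ≠ 0)
    (hray : ∀ τ : ℝ, 0 ≤ τ → x + τ • v ∈ s) : ¬ Bornology.IsBounded s := by
  intro hs
  obtain ⟨R, hR⟩ := (isBounded_iff_subset_closedBall x).1 hs
  obtain ⟨m, hm⟩ := exists_nat_gt (R / ‖v‖)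
  have hmem := hR (hray m m.cast_nonneg)
  rw [mem_closedBall, dist_self_add_left, norm_smul, Real.norm_natCast] at hmem
  rw [div_lt_iff₀ (norm_pos_iff.2 hv)] at hm
  linarith

theorem exists_ne_zero_forall_inner_eq_zero (D : Finset E) (hD : #D < Module.finrank ℝ E) :
    ∃ v : E, v ≠ 0 ∧ ∀ d ∈ D, ⟪v, d⟫ = 0 := by
  have hspan : Submodule.span ℝ (D : Set E) ≠ ⊤ := by
    intro htop
    have := finrank_span_finset_le_card (R := ℝ) D
    rw [Set.finrank, htop, finrank_top] at this
    omega
  obtain ⟨v, hvD, hv0⟩ :=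
    Submodule.exists_mem_ne_zero_of_ne_bot (mt Submodule.orthogonal_eq_bot_iff.1 hspan)
  exact ⟨v, hv0, fun d hd ↦ (Submodule.mem_orthogonal' _ v).1 hvD d (Submodule.subset_span hd)⟩

theorem exists_ne_zero_forall_inner_nonpos [FiniteDimensional ℝ E] (D : Finset E)
    (hD : #D ≤ Module.finrank ℝ E) (hE : 0 < Module.finrank ℝ E) :
    ∃ v : E, v ≠ 0 ∧ ∀ d ∈ D, ⟪v, d⟫ ≤ 0 := by
  rcases D.eq_empty_or_nonempty with rfl | ⟨d₀, hd₀⟩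
  · have := Module.finrank_pos_iff.1 hE
    obtain ⟨v, hv⟩ := exists_ne (0 : E)
    exact ⟨v, hv, by simp⟩
  obtain ⟨w, hw0, hw⟩ :=
    exists_ne_zero_forall_inner_eq_zero (D.erase d₀) (by rw [card_erase_of_mem hd₀]; omega)
  obtain ⟨v, hv0, hvd₀, hv⟩ :
      ∃ v : E, v ≠ 0 ∧ ⟪v, d₀⟫ ≤ 0 ∧ ∀ d ∈ D.erase d₀, ⟪v, d⟫ = 0 := by
    rcases le_total ⟪w, d₀⟫ 0 with h | h
    · exact ⟨w, hw0, h, hw⟩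
    · refine ⟨-w, neg_ne_zero.2 hw0, ?_, fun d hd ↦ ?_⟩
      · rwa [inner_neg_left, neg_nonpos]
      · rw [inner_neg_left, hw d hd, neg_zero]
  refine ⟨v, hv0, fun d hd ↦ ?_⟩
  rcases eq_or_ne d d₀ with rfl | hne
  · exact hvd₀
  · exact (hv d (mem_erase.2 ⟨hne, hd⟩)).le

end InnerProductSpace

section VoronoiCell

variable {n : ℕ} {T S : Finset (EuclideanSpace ℝ (Fin n))}

theorem add_smul_mem_vcell {x v : EuclideanSpace ℝ (Fin n)} (hx : x ∈ vcell T S)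
    (hv : ∀ s ∈ S, ∀ t ∈ T \ S, ⟪v, t - s⟫ ≤ 0) {τ : ℝ} (hτ : 0 ≤ τ) :
    x + τ • v ∈ vcell T S := by
  intro s hs t ht
  have hxst := (dist_le_dist_iff_two_inner_le x s t).1 (hx s hs t ht)
  rw [dist_le_dist_iff_two_inner_le, inner_add_left, real_inner_smul_left]
  linarith [mul_nonpos_of_nonneg_of_nonpos hτ (hv s hs t ht)]

theorem not_isBounded_vcell_of_card_mul_card_le (hn : 0 < n) (hcard : #S * #(T \ S) ≤ n)
    (hne : (vcell T S).Nonempty) : ¬ Bornology.IsBounded (vcell T S) := by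
  obtain ⟨x, hx⟩ := hne
  let normals := (S ×ˢ (T \ S)).image fun p ↦ p.2 - p.1
  have hnormals : #normals ≤ Module.finrank ℝ (EuclideanSpace ℝ (Fin n)) := by
    rw [finrank_euclideanSpace_fin]
    exact card_image_le.trans ((card_product _ _).trans_le hcard)
  obtain ⟨v, hv0, hv⟩ := exists_ne_zero_forall_inner_nonpos normals hnormals (by simpa using hn)
  refine not_isBounded_of_ray_subset hv0 fun τ hτ ↦ add_smul_mem_vcell hx (fun s hs t ht ↦ ?_) hτ
  exact hv _ (mem_image.2 ⟨(s, t), mem_product.2 ⟨hs, ht⟩, rfl⟩)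

end VoronoiCell

theorem stmt_7_general {n : ℕ} (hn : 2 ≤ n) (T S : Finset (EuclideanSpace ℝ (Fin n)))
    (hT : T.card ≤ 3) (hST : S ⊂ T)
    (hne : (vcell T S).Nonempty) :
    ¬ Bornology.IsBounded (vcell T S) := by
  have hsum : #S + #(T \ S) ≤ 3 := by
    rw [card_sdiff_of_subset hST.subset, Nat.add_sub_cancel' (card_le_card hST.subset)]
    exact hT
  have hprod : #S * #(T \ S) ≤ 2 := by
    have : #S ≤ 3 := by omega
    interval_cases #S <;> omega
  exact not_isBounded_vcell_of_card_mul_card_le (by omega) (by omega) hne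

theorem stmt_7 {n : ℕ} (hn : 2 ≤ n) (T S : Finset (EuclideanSpace ℝ (Fin n)))
    (hT : T.card ≤ 3) (hS : S.Nonempty) (hST : S ⊂ T)
    (hne : (vcell T S).Nonempty) :
    ¬ Bornology.IsBounded (vcell T S) :=
  stmt_7_general hn T S hT hST hne
end

section
/- If S ⊂ T ⊂ ℝⁿ with |S| = 3 and |T| = 4, then V_T(S) is either empty or unbounded. -/
open Finset Metric
open scoped Classical

theorem stmt_9 {n : ℕ} (T S : Finset (EuclideanSpace ℝ (Fin n)))
    (hST : S ⊆ T) (hS : S.card = 3) (hT : T.card = 4) :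
    vcell T S = ∅ ∨ ¬ Bornology.IsBounded (vcell T S) := by
  by_cases hne : vcell T S = ∅
  · exact Or.inl hne
  right
  obtain ⟨x, hx⟩ := Set.nonempty_iff_ne_empty.2 hne
  -- T \ S is a singleton {t}
  have hcard : (T \ S).card = 1 := by
    rw [Finset.card_sdiff_of_subset hST, hS, hT]
  obtain ⟨t, ht⟩ := Finset.card_eq_one.1 hcard
  have htmem : t ∈ T \ S := by rw [ht]; exact Finset.mem_singleton_self t
  have htS : t ∉ S := (Finset.mem_sdiff.1 htmem).2
  have hx' : ∀ s ∈ S, dist x s ≤ dist x t := fun s hs => hx s hs t htmem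
  -- x ≠ t
  have hSne : S.Nonempty := Finset.card_pos.1 (by rw [hS]; norm_num)
  obtain ⟨s₀, hs₀⟩ := hSne
  have hxt : x ≠ t := by
    rintro rfl
    have h0 : dist x s₀ ≤ 0 := by simpa using hx' s₀ hs₀
    have : s₀ = x := by
      have := dist_le_zero.1 h0
      exact (dist_eq_zero.1 (le_antisymm h0 dist_nonneg)).symm
    exact htS (this ▸ hs₀)
  have hnorm : (0:ℝ) < ‖x - t‖ := by
    rw [norm_pos_iff, sub_ne_zero]; exact hxt
  -- the ray from t through x stays in the cell
  have hray : ∀ c : ℝ, 0 ≤ c → x + c • (x - t) ∈ vcell T S := by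
    intro c hc s hs t' ht'
    have ht'' : t' = t := by rw [ht] at ht'; exact Finset.mem_singleton.1 ht'
    rw [ht'']
    have h1 : dist (x + c • (x - t)) t = (1 + c) * ‖x - t‖ := by
      have : x + c • (x - t) - t = (1 + c) • (x - t) := by
        rw [add_smul, one_smul]; abel
      rw [dist_eq_norm, this, norm_smul, Real.norm_eq_abs,
        abs_of_nonneg (by linarith)]
    have h2 : dist (x + c • (x - t)) s ≤ c * ‖x - t‖ + dist x s := by
      calc dist (x + c • (x - t)) s ≤ dist (x + c • (x - t)) x + dist x s :=
            dist_triangle _ _ _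
        _ = c * ‖x - t‖ + dist x s := by
            rw [dist_eq_norm, add_sub_cancel_left, norm_smul, Real.norm_eq_abs,
              abs_of_nonneg hc]
    have h3 : dist x s ≤ ‖x - t‖ := by
      have := hx' s hs
      rwa [dist_eq_norm] at this
    rw [h1]; nlinarith
  -- conclude unboundedness
  intro hb
  obtain ⟨r, hr⟩ := (Metric.isBounded_iff_subset_closedBall x).1 hb
  set c : ℝ := (|r| + 1) / ‖x - t‖ with hc
  have hc0 : 0 ≤ c := div_nonneg (by positivity) hnorm.le
  have hmem := hr (hray c hc0)
  have hdist : dist (x + c • (x - t)) x = |r| + 1 := by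
    rw [dist_eq_norm, add_sub_cancel_left, norm_smul, Real.norm_eq_abs,
      abs_of_nonneg hc0, hc, div_mul_cancel₀ _ hnorm.ne']
  have : |r| + 1 ≤ r := by rw [← hdist]; exact Metric.mem_closedBall.1 hmem
  have : r ≤ |r| := le_abs_self r
  linarith
end

section
/- Let T, T′ ⊂ ℝⁿ with |T| = |T′| = 3 and |T ∩ T′| = 2, and let s ∈ T \ T′, s′ ∈ T′ \ T. If V_T({s}) ⊆ V_{T′}({s′}), then all points of T ∪ T′ lie on a common straight line. -/
/-!
Move `s` to the origin and put `u = a - s`, `v = b - s`, `w = s' - s`, where `{a, b} = T ∩ T'`.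
The cell of `0` is `{y | 2⟪y, u⟫ ≤ ‖u‖², 2⟪y, v⟫ ≤ ‖v‖²}`. Since the cell of `0` contains the rays
`-t • z` with `⟪z, u⟫, ⟪z, v⟫ ≥ 0`, and these must stay in the cell of `w`, we get
`⟪z, w⟫ ≤ min ⟪z, u⟫ ⟪z, v⟫` for all such `z`. If `u` and `v` are independent, the circumcentre `y`
of `0, u, v` is a nonnegative combination of two such `z` (orthogonal to `v` and to `u`), so
`⟪y, w⟫ ≤ 0`; but `y` lies in the cell of `0`, hence in that of `w`, which forces
`‖w‖² ≤ 2⟪y, w⟫`, so `w = 0`. Thus `v ∈ ℝ ∙ u`, and then a `z ⊥ u` with `⟪z, w⟫ > 0` would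
violate the same inequality, so `w ∈ ℝ ∙ u` too.
-/

open Finset Metric
open scoped Classical RealInnerProductSpace

def voronoiCell {P : Type*} [PseudoMetricSpace P] (p q r : P) : Set P :=
  {x | dist x p ≤ dist x q ∧ dist x p ≤ dist x r}

lemma voronoiCell_sub {G : Type*} [NormedAddCommGroup G] (p q r c : G) :
    voronoiCell (p - c) (q - c) (r - c) = (· + c) ⁻¹' voronoiCell p q r := by
  ext x
  simp only [voronoiCell, Set.mem_preimage, Set.mem_ofPred_eq, dist_eq_norm, sub_sub_eq_add_sub]

section InnerProductSpace

variable {E : Type*} [NormedAddCommGroup E] [InnerProductSpace ℝ E]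

lemma norm_sub_le_norm_sub_iff_inner (y c d : E) :
    ‖y - c‖ ≤ ‖y - d‖ ↔ 2 * ⟪y, d - c⟫ ≤ ‖d‖ ^ 2 - ‖c‖ ^ 2 := by
  rw [← sq_le_sq₀ (norm_nonneg _) (norm_nonneg _), norm_sub_sq_real, norm_sub_sq_real,
    inner_sub_right]
  constructor <;> intro h <;> linarith

lemma mem_voronoiCell_zero_iff {y u v : E} :
    y ∈ voronoiCell 0 u v ↔ 2 * ⟪y, u⟫ ≤ ‖u‖ ^ 2 ∧ 2 * ⟪y, v⟫ ≤ ‖v‖ ^ 2 := by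
  simp only [voronoiCell, Set.mem_ofPred_eq, dist_eq_norm]
  rw [norm_sub_le_norm_sub_iff_inner, norm_sub_le_norm_sub_iff_inner]
  simp only [sub_zero, norm_zero]
  norm_num

lemma inner_le_inner_of_forall_norm_smul_add_le {z p q : E}
    (h : ∀ t : ℝ, 0 ≤ t → ‖t • z + p‖ ≤ ‖t • z + q‖) : ⟪z, p⟫ ≤ ⟪z, q⟫ := by
  have key : ∀ t : ℝ, 0 ≤ t → t * (2 * (⟪z, p⟫ - ⟪z, q⟫)) ≤ ‖q‖ ^ 2 - ‖p‖ ^ 2 := by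
    intro t ht
    have := (sq_le_sq₀ (norm_nonneg _) (norm_nonneg _)).2 (h t ht)
    rw [norm_add_sq_real, norm_add_sq_real, real_inner_smul_left, real_inner_smul_left] at this
    linarith
  by_contra! hlt
  have hd : 0 < 2 * (⟪z, p⟫ - ⟪z, q⟫) := by linarith
  have := key ((‖q‖ ^ 2 + 1) / (2 * (⟪z, p⟫ - ⟪z, q⟫))) (by positivity)
  rw [div_mul_cancel₀ _ hd.ne'] at this
  linarith [sq_nonneg ‖p‖]

lemma exists_inner_eq_zero_inner_pos {u v : E} (hv : v ∉ ℝ ∙ u) :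
    ∃ z : E, ⟪u, z⟫ = 0 ∧ 0 < ⟪z, v⟫ := by
  rw [← Submodule.orthogonal_orthogonal (ℝ ∙ u), Submodule.mem_orthogonal] at hv
  push Not at hv
  obtain ⟨z, hz, hzv⟩ := hv
  rw [Submodule.mem_orthogonal_singleton_iff_inner_right] at hz
  rcases hzv.lt_or_gt with hneg | hpos
  · exact ⟨-z, by rw [inner_neg_right, hz, neg_zero], by rw [inner_neg_left]; linarith⟩
  · exact ⟨z, hz, hpos⟩

lemma mem_span_singleton_comm {u v : E} (hu : u ≠ 0) (h : u ∈ ℝ ∙ v) : v ∈ ℝ ∙ u := by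
  have hu' : u ∉ Submodule.span ℝ (∅ : Set E) := by
    rwa [Submodule.span_empty, Submodule.mem_bot]
  simpa using mem_span_insert_exchange (by simpa using h) hu'
section CellInclusion

variable {u v w : E} (H : voronoiCell 0 u v ⊆ voronoiCell w u v)
include H

lemma inner_le_of_voronoiCell_subset {z : E} (hu : 0 ≤ ⟪z, u⟫) (hv : 0 ≤ ⟪z, v⟫) :
    ⟪z, w⟫ ≤ ⟪z, u⟫ ∧ ⟪z, w⟫ ≤ ⟪z, v⟫ := by
  have hdist : ∀ t : ℝ, ∀ p : E, dist (-(t • z)) p = ‖t • z + p‖ := fun t p ↦ by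
    rw [dist_eq_norm, ← norm_neg]; congr 1; abel
  have hray : ∀ t : ℝ, 0 ≤ t →
      ‖t • z + w‖ ≤ ‖t • z + u‖ ∧ ‖t • z + w‖ ≤ ‖t • z + v‖ := fun t ht ↦ by
    have hmem : -(t • z) ∈ voronoiCell 0 u v := by
      refine mem_voronoiCell_zero_iff.2 ⟨?_, ?_⟩ <;>
        rw [inner_neg_left, real_inner_smul_left] <;> nlinarith [sq_nonneg ‖u‖, sq_nonneg ‖v‖]
    simpa only [voronoiCell, Set.mem_ofPred_eq, hdist] using H hmem
  exact ⟨inner_le_inner_of_forall_norm_smul_add_le fun t ht ↦ (hray t ht).1,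
    inner_le_inner_of_forall_norm_smul_add_le fun t ht ↦ (hray t ht).2⟩

lemma mem_span_singleton_of_voronoiCell_subset_of_mem (hv : v ∈ ℝ ∙ u) : w ∈ ℝ ∙ u := by
  by_contra hw
  obtain ⟨z, hzu, hzw⟩ := exists_inner_eq_zero_inner_pos hw
  obtain ⟨c, rfl⟩ := Submodule.mem_span_singleton.1 hv
  have hzu' : ⟪z, u⟫ = 0 := by rwa [real_inner_comm]
  have := (inner_le_of_voronoiCell_subset H (z := z) hzu'.ge
    (by rw [real_inner_smul_right, hzu', mul_zero])).1
  linarith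

lemma mem_span_singleton_of_voronoiCell_subset (hu : u ≠ 0) (hw : w ≠ 0) : v ∈ ℝ ∙ u := by
  by_contra hv
  obtain ⟨z₁, hz₁u, hz₁v⟩ := exists_inner_eq_zero_inner_pos hv
  obtain ⟨z₂, hz₂v, hz₂u⟩ :=
    exists_inner_eq_zero_inner_pos fun h ↦ hv (mem_span_singleton_comm hu h)
  rw [real_inner_comm] at hz₁u hz₂v
  have hz₁w := (inner_le_of_voronoiCell_subset H hz₁u.ge hz₁v.le).1
  have hz₂w := (inner_le_of_voronoiCell_subset H hz₂u.le hz₂v.ge).2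
  -- the circumcentre of `0`, `u`, `v`
  set y := (‖u‖ ^ 2 / (2 * ⟪z₂, u⟫)) • z₂ + (‖v‖ ^ 2 / (2 * ⟪z₁, v⟫)) • z₁
  have hyu : 2 * ⟪y, u⟫ = ‖u‖ ^ 2 := by
    simp only [y, inner_add_left, real_inner_smul_left, hz₁u]
    field_simp
    ring
  have hyv : 2 * ⟪y, v⟫ = ‖v‖ ^ 2 := by
    simp only [y, inner_add_left, real_inner_smul_left, hz₂v]
    field_simp
    ring
  have hyw : ⟪y, w⟫ ≤ 0 := by
    simp only [y, inner_add_left, real_inner_smul_left]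
    exact add_nonpos (mul_nonpos_of_nonneg_of_nonpos (by positivity) (hz₂v ▸ hz₂w))
      (mul_nonpos_of_nonneg_of_nonpos (by positivity) (hz₁u ▸ hz₁w))
  have hy := (H (mem_voronoiCell_zero_iff.2 ⟨hyu.le, hyv.le⟩)).1
  rw [dist_eq_norm, dist_eq_norm, norm_sub_le_norm_sub_iff_inner, inner_sub_right] at hy
  exact hw (by simpa using (by linarith : ‖w‖ ^ 2 ≤ 0))

end CellInclusion

theorem collinear_of_voronoiCell_subset {s a b s' : E} (ha : a ≠ s) (hs' : s' ≠ s)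
    (h : voronoiCell s a b ⊆ voronoiCell s' a b) : Collinear ℝ ({s, a, b, s'} : Set E) := by
  have H : voronoiCell 0 (a - s) (b - s) ⊆ voronoiCell (s' - s) (a - s) (b - s) := by
    have := Set.preimage_mono (f := (· + s)) h
    rwa [← voronoiCell_sub, ← voronoiCell_sub, sub_self] at this
  have hv := mem_span_singleton_of_voronoiCell_subset H (sub_ne_zero.2 ha) (sub_ne_zero.2 hs')
  have hw := mem_span_singleton_of_voronoiCell_subset_of_mem H hv
  have hline : ∀ p, p - s ∈ ℝ ∙ (a - s) → ∃ r : ℝ, p = r • (a - s) +ᵥ s := fun p hp ↦ by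
    obtain ⟨r, hr⟩ := Submodule.mem_span_singleton.1 hp
    exact ⟨r, by rw [hr, vadd_eq_add, sub_add_cancel]⟩
  rw [collinear_iff_of_mem (Set.mem_insert s _)]
  refine ⟨a - s, ?_⟩
  simp only [Set.mem_insert_iff, Set.mem_singleton_iff]
  rintro p (rfl | rfl | rfl | rfl)
  · exact hline _ (by simp)
  · exact hline _ (Submodule.mem_span_singleton_self _)
  · exact hline _ hv
  · exact hline _ hw

end InnerProductSpace

lemma Finset.sdiff_singleton_eq_inter {α : Type*} [DecidableEq α] {T T' : Finset α} {s : α}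
    (hs : s ∈ T \ T') (hcard : #T = #(T ∩ T') + 1) : T \ {s} = T ∩ T' := by
  refine (eq_of_subset_of_card_le (fun x hx ↦ ?_) ?_).symm
  · rw [mem_inter] at hx
    exact mem_sdiff.2 ⟨hx.1, fun hxs ↦ (mem_sdiff.1 hs).2 (mem_singleton.1 hxs ▸ hx.2)⟩
  · rw [sdiff_singleton_eq_erase, card_erase_of_mem (mem_sdiff.1 hs).1]
    omega

lemma vcell_singleton_eq {n : ℕ} {T : Finset (EuclideanSpace ℝ (Fin n))}
    {s a b : EuclideanSpace ℝ (Fin n)} (h : T \ {s} = {a, b}) :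
    vcell T {s} = voronoiCell s a b := by
  ext x
  simp [vcell, voronoiCell, h]

theorem stmt_14 {n : ℕ} (T T' : Finset (EuclideanSpace ℝ (Fin n)))
    (hT : T.card = 3) (hT' : T'.card = 3) (hTT' : (T ∩ T').card = 2)
    (s s' : EuclideanSpace ℝ (Fin n)) (hs : s ∈ T \ T') (hs' : s' ∈ T' \ T)
    (hsub : vcell T {s} ⊆ vcell T' {s'}) :
    Collinear ℝ (↑(T ∪ T') : Set (EuclideanSpace ℝ (Fin n))) := by
  obtain ⟨a, b, -, hab⟩ := card_eq_two.1 hTT'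
  have hI : T \ {s} = {a, b} := hab ▸ sdiff_singleton_eq_inter hs (by omega)
  have hI' : T' \ {s'} = {a, b} :=
    hab ▸ inter_comm T' T ▸ sdiff_singleton_eq_inter hs' (by rw [inter_comm]; omega)
  rw [vcell_singleton_eq hI, vcell_singleton_eq hI'] at hsub
  have ha : a ∈ T' := (mem_inter.1 (hab ▸ mem_insert_self a {b})).2
  have hsT' := (mem_sdiff.1 hs).2
  refine (collinear_of_voronoiCell_subset (ne_of_mem_of_not_mem ha hsT')
    (ne_of_mem_of_not_mem (mem_sdiff.1 hs').1 hsT') hsub).subset ?_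
  have hT3 : T = {s, a, b} := by
    rw [← hI, sdiff_singleton_eq_erase, insert_erase (mem_sdiff.1 hs).1]
  have hT'3 : T' = {s', a, b} := by
    rw [← hI', sdiff_singleton_eq_erase, insert_erase (mem_sdiff.1 hs').1]
  rw [hT3, hT'3]
  intro x
  simp only [coe_union, coe_insert, coe_singleton, Set.mem_union, Set.mem_insert_iff,
    Set.mem_singleton_iff]
  tauto
end

section
/- If |S| ≥ 2, then V_T(S) equals the union over s ∈ S of the sets V_{T\{s}}(S\{s}) ∩ V_S({s}). -/
open Finset Metric
open scoped Classical

theorem stmt_15 {n : ℕ} (T S : Finset (EuclideanSpace ℝ (Fin n)))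
    (hST : S ⊂ T) (hS : 2 ≤ S.card) :
    vcell T S = ⋃ s ∈ S, (vcell (T.erase s) (S.erase s) ∩ vcell S {s}) := by
  ext x
  simp only [Set.mem_iUnion, Set.mem_inter_iff, vcell, Set.mem_setOf_eq]
  constructor
  · intro hx
    have hSne : S.Nonempty := Finset.card_pos.mp (by omega)
    obtain ⟨s, hs, hmin⟩ := S.exists_min_image (fun a => dist x a) hSne
    refine ⟨s, hs, ?_, ?_⟩
    · intro a ha t ht
      have ha' := Finset.mem_of_mem_erase ha
      have ht' : t ∈ T \ S := by
        obtain ⟨ht1, ht2⟩ := Finset.mem_sdiff.mp ht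
        obtain ⟨hts, htT⟩ := Finset.mem_erase.mp ht1
        exact Finset.mem_sdiff.mpr ⟨htT, fun h => ht2 (Finset.mem_erase.mpr ⟨hts, h⟩)⟩
      exact hx a ha' t ht'
    · intro a ha t ht
      simp only [Finset.mem_singleton] at ha
      subst ha
      simp only [Finset.mem_sdiff, Finset.mem_singleton] at ht
      exact hmin t ht.1
  · rintro ⟨s, hs, h1, h2⟩ a ha t ht
    have htT : t ∈ T := (Finset.mem_sdiff.mp ht).1
    have htS : t ∉ S := (Finset.mem_sdiff.mp ht).2
    have hts : t ≠ s := fun h => htS (h ▸ hs)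
    have ht' : t ∈ T.erase s \ S.erase s := by
      simp [Finset.mem_erase, hts, htT, htS]
    by_cases has : a = s
    · subst has
      obtain ⟨b, hb, hbs⟩ := Finset.exists_mem_ne (s:=S) (by omega) a
      have hb' : b ∈ S.erase a := Finset.mem_erase.mpr ⟨hbs, hb⟩
      have h2' : dist x a ≤ dist x b := by
        apply h2 a (Finset.mem_singleton_self a)
        simp [Finset.mem_sdiff, hb, hbs]
      exact h2'.trans (h1 b hb' t ht')
    · exact h1 a (Finset.mem_erase.mpr ⟨has, ha⟩) t ht'
end

section
/- Suppose there exist s₁, s₂ ∈ S and t₁, t₂ ∈ T \ S such that the halfspaces {x : ‖s₁−x‖ ≤ ‖t₁−x‖} and {x : ‖s₂−x‖ ≤ ‖t₂−x‖} coincide. Then V_T(S) equals the intersection of the remaining halfspaces {x : ‖s−x‖ ≤ ‖t−x‖} over pairs (s,t) ∈ S × (T\S) with (s,t) ∉ {(s₁,t₁),(s₂,t₂)}; i.e., these two inequalities are redundant. -/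
/-!
The closed halfspace `dominance s t` determines its near site `s` once the far site `t` is
fixed (test membership at the midpoint of `s` and `t`), and determines `t` once `s` is fixed
(test along the ray from `s` through `t`). So `(s₁, t₁) ≠ (s₂, t₂)` forces `s₁ ≠ s₂` and
`t₁ ≠ t₂`, and the cross constraints `dominance s₁ t₂`, `dominance s₂ t₁` are among the
remaining ones. A point `x` satisfying them but outside `dominance s₁ t₁ = dominance s₂ t₂`
would give the cycle `d(x,s₁) ≤ d(x,t₂) < d(x,s₂) ≤ d(x,t₁) < d(x,s₁)`.
-/

open Finset Filter Topology
open scoped Classical RealInnerProductSpace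

def dominance {α : Type*} [Dist α] (s t : α) : Set α :=
  {x | dist x s ≤ dist x t}

theorem mem_dominance_of_cross {α : Type*} [Dist α] {s₁ s₂ t₁ t₂ x : α}
    (h : dominance s₁ t₁ = dominance s₂ t₂) (h₁₂ : x ∈ dominance s₁ t₂)
    (h₂₁ : x ∈ dominance s₂ t₁) : x ∈ dominance s₁ t₁ := by
  by_contra h₁₁
  have h₂₂ : x ∉ dominance s₂ t₂ := h ▸ h₁₁
  simp only [dominance, Set.mem_ofPred_eq, not_le] at h₁₂ h₂₁ h₁₁ h₂₂
  linarith

section InnerProductSpace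

variable {E : Type*} [NormedAddCommGroup E] [InnerProductSpace ℝ E]

theorem dist_sq_sub_dist_sq_eq (x s t : E) :
    dist x t ^ 2 - dist x s ^ 2 = ‖t - s‖ ^ 2 - 2 * ⟪x - s, t - s⟫ := by
  rw [dist_eq_norm, dist_eq_norm, show x - t = (x - s) - (t - s) by abel, norm_sub_sq_real]
  ring

theorem mem_dominance_iff_inner_le (x s t : E) :
    x ∈ dominance s t ↔ 2 * ⟪x - s, t - s⟫ ≤ ‖t - s‖ ^ 2 := by
  rw [dominance, Set.mem_ofPred_eq, ← sq_le_sq₀ dist_nonneg dist_nonneg, ← sub_nonneg,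
    dist_sq_sub_dist_sq_eq, sub_nonneg]

theorem mem_dominance_iff_le_inner (x s t : E) :
    x ∈ dominance t s ↔ ‖t - s‖ ^ 2 ≤ 2 * ⟪x - s, t - s⟫ := by
  rw [dominance, Set.mem_ofPred_eq, ← sq_le_sq₀ dist_nonneg dist_nonneg, ← sub_nonpos,
    dist_sq_sub_dist_sq_eq, sub_nonpos]

theorem eq_of_norm_sq_le_inner {u v : E} (hu : ‖u‖ ^ 2 ≤ ⟪u, v⟫) (hv : ‖v‖ ^ 2 ≤ ⟪u, v⟫) :
    u = v := by
  have h : ‖u - v‖ ^ 2 ≤ 0 := by rw [norm_sub_sq_real]; linarith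
  exact sub_eq_zero.mp <| norm_eq_zero.mp <| pow_eq_zero_iff two_ne_zero |>.mp <|
    le_antisymm h (sq_nonneg _)

theorem norm_sq_le_inner_of_dominance_subset_left {a b c : E}
    (h : dominance a c ⊆ dominance b c) : ‖b - c‖ ^ 2 ≤ ⟪a - c, b - c⟫ := by
  have hmid : midpoint ℝ a c ∈ dominance a c := by
    simp only [dominance, Set.mem_ofPred_eq, dist_midpoint_left, dist_midpoint_right, le_refl]
  have hb := (mem_dominance_iff_le_inner _ c b).mp (h hmid)
  rwa [← vsub_eq_sub (midpoint ℝ a c), midpoint_vsub_right, vsub_eq_sub, real_inner_smul_left,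
    ← mul_assoc, invOf_eq_inv, mul_inv_cancel₀ two_ne_zero, one_mul] at hb

theorem norm_sq_le_inner_of_dominance_subset_right {s t t' : E} (ht : t ≠ s)
    (h : dominance s t' ⊆ dominance s t) : ‖t' - s‖ ^ 2 ≤ ⟪t - s, t' - s⟫ := by
  -- `s + (μ / 2) • (t - s)` lies outside `dominance s t` for `μ > 1`; let `μ` tend to `1`.
  have hray : ∀ μ : ℝ, 1 < μ → ‖t' - s‖ ^ 2 < μ * ⟪t - s, t' - s⟫ := by
    intro μ hμ
    have hpos : 0 < ‖t - s‖ ^ 2 := by positivity [sub_ne_zero.mpr ht]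
    have hout : s + (μ / 2) • (t - s) ∉ dominance s t' := by
      refine fun hx => (h hx |> (mem_dominance_iff_inner_le _ s t).mp |> not_lt.mpr) ?_
      rw [add_sub_cancel_left, real_inner_smul_left, real_inner_self_eq_norm_sq]
      nlinarith
    rw [mem_dominance_iff_inner_le, add_sub_cancel_left, real_inner_smul_left, not_le] at hout
    linarith
  refine ge_of_tendsto (f := fun μ : ℝ => μ * ⟪t - s, t' - s⟫) (x := 𝓝[>] 1) ?_ ?_
  · simpa using ((continuous_mul_const _).tendsto (1 : ℝ)).mono_left nhdsWithin_le_nhds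
  · exact eventually_nhdsWithin_of_forall fun μ hμ => (hray μ hμ).le

theorem eq_of_dominance_eq_left {a b c : E} (h : dominance a c = dominance b c) : a = b := by
  have hab := norm_sq_le_inner_of_dominance_subset_left h.le
  have hba := norm_sq_le_inner_of_dominance_subset_left h.ge
  rw [real_inner_comm] at hba
  simpa using eq_of_norm_sq_le_inner hba hab

theorem eq_of_dominance_eq_right {s t t' : E} (ht : t ≠ s) (ht' : t' ≠ s)
    (h : dominance s t = dominance s t') : t = t' := by
  have htt' := norm_sq_le_inner_of_dominance_subset_right ht h.ge
  have ht't := norm_sq_le_inner_of_dominance_subset_right ht' h.le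
  rw [real_inner_comm] at ht't
  simpa using eq_of_norm_sq_le_inner ht't htt'

end InnerProductSpace

theorem Finset.set_biInter_erase_erase {ι α : Type*} [DecidableEq ι] (s : Finset ι)
    (f : ι → Set α) {i j : ι} (hi : i ∈ s) (hj : j ∈ s) (hji : j ≠ i)
    (h : ⋂ k ∈ (s.erase i).erase j, f k ⊆ f i ∩ f j) :
    ⋂ k ∈ (s.erase i).erase j, f k = ⋂ k ∈ s, f k := by
  have hs : s = insert i (insert j ((s.erase i).erase j)) := by
    rw [insert_erase (mem_erase.mpr ⟨hji, hj⟩), insert_erase hi]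
  conv_rhs => rw [hs, set_biInter_insert, set_biInter_insert, ← Set.inter_assoc]
  exact (Set.inter_eq_right.mpr h).symm

theorem vcell_eq_biInter_dominance {n : ℕ} (T S : Finset (EuclideanSpace ℝ (Fin n))) :
    vcell T S = ⋂ p ∈ S ×ˢ (T \ S), dominance p.1 p.2 := by
  ext x
  simp only [vcell, dominance, Set.mem_ofPred_eq, Set.mem_iInter, mem_product, Prod.forall, and_imp]
  exact ⟨fun h s t hs ht => h s hs t ht, fun h s hs t ht => h s t hs ht⟩

theorem stmt_16_general {n : ℕ} (T S : Finset (EuclideanSpace ℝ (Fin n)))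
    (s₁ s₂ t₁ t₂ : EuclideanSpace ℝ (Fin n))
    (hs₁ : s₁ ∈ S) (hs₂ : s₂ ∈ S) (ht₁ : t₁ ∈ T \ S) (ht₂ : t₂ ∈ T \ S)
    (hne : (s₁, t₁) ≠ (s₂, t₂))
    (hsame : {x : EuclideanSpace ℝ (Fin n) | dist x s₁ ≤ dist x t₁} =
             {x : EuclideanSpace ℝ (Fin n) | dist x s₂ ≤ dist x t₂}) :
    vcell T S =
      ⋂ p ∈ ((S ×ˢ (T \ S)).erase (s₁, t₁)).erase (s₂, t₂),
        {x : EuclideanSpace ℝ (Fin n) | dist x p.1 ≤ dist x p.2} := by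
  have hdom : dominance s₁ t₁ = dominance s₂ t₂ := hsame
  have ht_ne : ∀ {s t}, s ∈ S → t ∈ T \ S → t ≠ s := fun hs ht hts =>
    (mem_sdiff.mp ht).2 (hts ▸ hs)
  have hs : s₁ ≠ s₂ := fun h => hne <| by
    subst h; rw [eq_of_dominance_eq_right (ht_ne hs₁ ht₁) (ht_ne hs₁ ht₂) hdom]
  have ht : t₁ ≠ t₂ := fun h => hne <| by subst h; rw [eq_of_dominance_eq_left hdom]
  have hmem : ∀ {s t}, s ∈ S → t ∈ T \ S → (s, t) ≠ (s₁, t₁) → (s, t) ≠ (s₂, t₂) →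
      (s, t) ∈ ((S ×ˢ (T \ S)).erase (s₁, t₁)).erase (s₂, t₂) := fun hs ht h₁ h₂ =>
    mem_erase.mpr ⟨h₂, mem_erase.mpr ⟨h₁, mem_product.mpr ⟨hs, ht⟩⟩⟩
  rw [vcell_eq_biInter_dominance]
  refine (set_biInter_erase_erase _ _ (mem_product.mpr ⟨hs₁, ht₁⟩)
    (mem_product.mpr ⟨hs₂, ht₂⟩) (Ne.symm hne) fun x hx => ?_).symm
  simp only [Set.mem_iInter] at hx
  have h₁₁ := mem_dominance_of_cross hdom
    (hx (s₁, t₂) (hmem hs₁ ht₂ (by simp [ht.symm]) (by simp [hs])))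
    (hx (s₂, t₁) (hmem hs₂ ht₁ (by simp [hs.symm]) (by simp [ht])))
  exact ⟨h₁₁, hdom ▸ h₁₁⟩

theorem stmt_16 {n : ℕ} (T S : Finset (EuclideanSpace ℝ (Fin n)))
    (hS : 2 ≤ S.card) (hTS : 2 ≤ (T \ S).card) (hST : S ⊂ T)
    (s₁ s₂ t₁ t₂ : EuclideanSpace ℝ (Fin n))
    (hs₁ : s₁ ∈ S) (hs₂ : s₂ ∈ S) (ht₁ : t₁ ∈ T \ S) (ht₂ : t₂ ∈ T \ S)
    (hne : (s₁, t₁) ≠ (s₂, t₂))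
    (hsame : {x : EuclideanSpace ℝ (Fin n) | dist x s₁ ≤ dist x t₁} =
             {x : EuclideanSpace ℝ (Fin n) | dist x s₂ ≤ dist x t₂}) :
    vcell T S =
      ⋂ p ∈ ((S ×ˢ (T \ S)).erase (s₁, t₁)).erase (s₂, t₂),
        {x : EuclideanSpace ℝ (Fin n) | dist x p.1 ≤ dist x p.2} :=
  stmt_16_general T S s₁ s₂ t₁ t₂ hs₁ hs₂ ht₁ ht₂ hne hsame
end

section
/- Let S = {s₁,s₂} and T = {s₁,s₂,t₁,t₂} ⊂ ℝ² with all four points distinct. If all four points have equal norm (so they lie on a common circle centered at the origin) and [s₁,s₂] ∩ [t₁,t₂] ≠ ∅, then V_T(S) = {0}. -/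
open Metric
open scoped Classical

private lemma segA {E : Type*} [NormedAddCommGroup E] [NormedSpace ℝ E]
    [StrictConvexSpace ℝ E] {x y z : E} (hyz : y ≠ z) (hx : x ∈ segment ℝ y z)
    (h1 : ‖y‖ ≤ ‖x‖) (h2 : ‖z‖ ≤ ‖x‖) : x = y ∨ x = z := by
  obtain ⟨a, b, ha, hb, hab, hxe⟩ := hx
  rcases eq_or_lt_of_le ha with ha0 | ha0
  · right
    have hb1 : b = 1 := by linarith
    rw [← hxe, ← ha0, hb1]; simp
  rcases eq_or_lt_of_le hb with hb0 | hb0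
  · left
    have ha1 : a = 1 := by linarith
    rw [← hxe, ← hb0, ha1]; simp
  exfalso
  have := norm_combo_lt_of_ne h1 h2 hyz ha0 hb0 hab
  rw [hxe] at this
  exact lt_irrefl _ this

private lemma collin {E : Type*} [NormedAddCommGroup E] [InnerProductSpace ℝ E]
    {x d : E} (hd : d ≠ 0) (h1 : ‖x + d‖ = ‖x‖) {f : ℝ} (h2 : ‖x + f • d‖ = ‖x‖) :
    f = 0 ∨ f = 1 := by
  have e1 : ‖x + d‖ ^ 2 = ‖x‖ ^ 2 + 2 * (inner ℝ x d : ℝ) + ‖d‖ ^ 2 := norm_add_sq_real x d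
  have e2 : ‖x + f • d‖ ^ 2 = ‖x‖ ^ 2 + 2 * (f * (inner ℝ x d : ℝ)) + f ^ 2 * ‖d‖ ^ 2 := by
    rw [norm_add_sq_real, real_inner_smul_right, norm_smul]
    simp [mul_pow]
  rw [h1] at e1
  rw [h2] at e2
  have hdn : (0:ℝ) < ‖d‖ ^ 2 := by
    have : ‖d‖ ≠ 0 := norm_ne_zero_iff.mpr hd
    positivity
  have key : f * (f - 1) * ‖d‖ ^ 2 = 0 := by linear_combination f * e1 - e2
  rcases mul_eq_zero.mp key with h | h
  · rcases mul_eq_zero.mp h with h | h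
    · exact Or.inl h
    · exact Or.inr (by linarith)
  · exact absurd h (by positivity)

private lemma inner_nonpos_of_dist {E : Type*} [NormedAddCommGroup E] [InnerProductSpace ℝ E]
    {x s t : E} (h : dist x s ≤ dist x t) (hn : ‖s‖ = ‖t‖) : (inner ℝ x (t - s) : ℝ) ≤ 0 := by
  have h2 : dist x s ^ 2 ≤ dist x t ^ 2 := pow_le_pow_left₀ dist_nonneg h 2
  rw [dist_eq_norm, dist_eq_norm] at h2
  have e1 := norm_sub_sq_real x s
  have e2 := norm_sub_sq_real x t
  have hn2 : ‖s‖ ^ 2 = ‖t‖ ^ 2 := by rw [hn]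
  rw [inner_sub_right]
  linarith

theorem stmt_17 (s₁ s₂ t₁ t₂ : EuclideanSpace ℝ (Fin 2))
    (hd : List.Pairwise (· ≠ ·) [s₁, s₂, t₁, t₂])
    (hnorm : ‖s₁‖ = ‖s₂‖ ∧ ‖s₂‖ = ‖t₁‖ ∧ ‖t₁‖ = ‖t₂‖)
    (hseg : ∃! p : EuclideanSpace ℝ (Fin 2),
      p ∈ segment ℝ s₁ s₂ ∩ segment ℝ t₁ t₂) :
    {x : EuclideanSpace ℝ (Fin 2) |
        dist x s₁ ≤ dist x t₁ ∧ dist x s₁ ≤ dist x t₂ ∧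
        dist x s₂ ≤ dist x t₁ ∧ dist x s₂ ≤ dist x t₂} =
      {0} := by
  obtain ⟨hn1, hn2, hn3⟩ := hnorm
  simp only [List.pairwise_cons, List.mem_cons, List.mem_singleton, List.not_mem_nil] at hd
  obtain ⟨hd1, hd2, hd3, _⟩ := hd
  have h12 : s₁ ≠ s₂ := hd1 s₂ (by tauto)
  have h1t1 : s₁ ≠ t₁ := hd1 t₁ (by tauto)
  have h1t2 : s₁ ≠ t₂ := hd1 t₂ (by tauto)
  have h2t1 : s₂ ≠ t₁ := hd2 t₁ (by tauto)
  have h2t2 : s₂ ≠ t₂ := hd2 t₂ (by tauto)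
  have ht12 : t₁ ≠ t₂ := hd3 t₂ (by tauto)
  obtain ⟨p, ⟨hps, hpt⟩, -⟩ := hseg
  obtain ⟨u1, u2, hu1, hu2, husum, hueq⟩ := hps
  obtain ⟨v1, v2, hv1, hv2, hvsum, hveq⟩ := hpt
  have hpsmem : p ∈ segment ℝ s₁ s₂ := ⟨u1, u2, hu1, hu2, husum, hueq⟩
  have hptmem : p ∈ segment ℝ t₁ t₂ := ⟨v1, v2, hv1, hv2, hvsum, hveq⟩
  have hu1p : 0 < u1 := by
    rcases eq_or_lt_of_le hu1 with h | h
    · exfalso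
      have hu21 : u2 = 1 := by linarith
      have hp2 : p = s₂ := by rw [← hueq, ← h, hu21]; simp
      have hmem : s₂ ∈ segment ℝ t₁ t₂ := hp2 ▸ hptmem
      have := segA ht12 hmem (le_of_eq hn2.symm) (le_of_eq (hn3.symm.trans hn2.symm))
      tauto
    · exact h
  have hu2p : 0 < u2 := by
    rcases eq_or_lt_of_le hu2 with h | h
    · exfalso
      have hu11 : u1 = 1 := by linarith
      have hp1 : p = s₁ := by rw [← hueq, ← h, hu11]; simp
      have hmem : s₁ ∈ segment ℝ t₁ t₂ := hp1 ▸ hptmem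
      have := segA ht12 hmem (le_of_eq (hn2.symm.trans hn1.symm))
        (le_of_eq ((hn3.symm.trans hn2.symm).trans hn1.symm))
      tauto
    · exact h
  have hv1p : 0 < v1 := by
    rcases eq_or_lt_of_le hv1 with h | h
    · exfalso
      have hv21 : v2 = 1 := by linarith
      have hp2 : p = t₂ := by rw [← hveq, ← h, hv21]; simp
      have hmem : t₂ ∈ segment ℝ s₁ s₂ := hp2 ▸ hpsmem
      have := segA h12 hmem (le_of_eq ((hn1.trans hn2).trans hn3))
        (le_of_eq (hn2.trans hn3))
      rcases this with h' | h'
      · exact h1t2 h'.symm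
      · exact h2t2 h'.symm
    · exact h
  have hv2p : 0 < v2 := by
    rcases eq_or_lt_of_le hv2 with h | h
    · exfalso
      have hv11 : v1 = 1 := by linarith
      have hp1 : p = t₁ := by rw [← hveq, ← h, hv11]; simp
      have hmem : t₁ ∈ segment ℝ s₁ s₂ := hp1 ▸ hpsmem
      have := segA h12 hmem (le_of_eq (hn1.trans hn2)) (le_of_eq hn2)
      rcases this with h' | h'
      · exact h1t1 h'.symm
      · exact h2t1 h'.symm
    · exact h
  have key : (u1*v1) • (t₁ - s₁) + (u1*v2) • (t₂ - s₁) + (u2*v1) • (t₁ - s₂)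
      + (u2*v2) • (t₂ - s₂) = 0 := by
    have heq : (u1*v1) • (t₁ - s₁) + (u1*v2) • (t₂ - s₁) + (u2*v1) • (t₁ - s₂)
        + (u2*v2) • (t₂ - s₂) = (v1 • t₁ + v2 • t₂) - (u1 • s₁ + u2 • s₂) := by
      have e2 : u2 = 1 - u1 := by linarith
      have e4 : v2 = 1 - v1 := by linarith
      rw [e2, e4]; module
    rw [heq, hueq, hveq, sub_self]
  ext x
  simp only [Set.mem_setOf_eq, Set.mem_singleton_iff]
  constructor
  · rintro ⟨c11, c12, c21, c22⟩
    have i11 : (inner ℝ x (t₁ - s₁) : ℝ) ≤ 0 := inner_nonpos_of_dist c11 (hn1.trans hn2)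
    have i12 : (inner ℝ x (t₂ - s₁) : ℝ) ≤ 0 :=
      inner_nonpos_of_dist c12 ((hn1.trans hn2).trans hn3)
    have i21 : (inner ℝ x (t₁ - s₂) : ℝ) ≤ 0 := inner_nonpos_of_dist c21 hn2
    have i22 : (inner ℝ x (t₂ - s₂) : ℝ) ≤ 0 := inner_nonpos_of_dist c22 (hn2.trans hn3)
    have hsum0 : (u1*v1) * (inner ℝ x (t₁ - s₁) : ℝ) + (u1*v2) * (inner ℝ x (t₂ - s₁) : ℝ)
        + (u2*v1) * (inner ℝ x (t₁ - s₂) : ℝ) + (u2*v2) * (inner ℝ x (t₂ - s₂) : ℝ) = 0 := by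
      have h := congrArg (fun y : EuclideanSpace ℝ (Fin 2) => (inner ℝ x y : ℝ)) key
      simp only [inner_add_right, real_inner_smul_right, inner_zero_right] at h
      exact h
    have p11 : (0:ℝ) < u1*v1 := mul_pos hu1p hv1p
    have p12 : (0:ℝ) < u1*v2 := mul_pos hu1p hv2p
    have p21 : (0:ℝ) < u2*v1 := mul_pos hu2p hv1p
    have p22 : (0:ℝ) < u2*v2 := mul_pos hu2p hv2p
    have m11 : (u1*v1) * (inner ℝ x (t₁ - s₁) : ℝ) ≤ 0 :=
      mul_nonpos_of_nonneg_of_nonpos p11.le i11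
    have m12 : (u1*v2) * (inner ℝ x (t₂ - s₁) : ℝ) ≤ 0 :=
      mul_nonpos_of_nonneg_of_nonpos p12.le i12
    have m21 : (u2*v1) * (inner ℝ x (t₁ - s₂) : ℝ) ≤ 0 :=
      mul_nonpos_of_nonneg_of_nonpos p21.le i21
    have m22 : (u2*v2) * (inner ℝ x (t₂ - s₂) : ℝ) ≤ 0 :=
      mul_nonpos_of_nonneg_of_nonpos p22.le i22
    have e11 : (u1*v1) * (inner ℝ x (t₁ - s₁) : ℝ) = 0 := by linarith
    have e12 : (u1*v2) * (inner ℝ x (t₂ - s₁) : ℝ) = 0 := by linarith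
    have e21 : (u2*v1) * (inner ℝ x (t₁ - s₂) : ℝ) = 0 := by linarith
    have z11 : (inner ℝ x (t₁ - s₁) : ℝ) = 0 := by
      rcases mul_eq_zero.mp e11 with h | h
      · exact absurd h p11.ne'
      · exact h
    have z12 : (inner ℝ x (t₂ - s₁) : ℝ) = 0 := by
      rcases mul_eq_zero.mp e12 with h | h
      · exact absurd h p12.ne'
      · exact h
    have z21 : (inner ℝ x (t₁ - s₂) : ℝ) = 0 := by
      rcases mul_eq_zero.mp e21 with h | h
      · exact absurd h p21.ne'
      · exact h
    have hxu : (inner ℝ x (s₂ - s₁) : ℝ) = 0 := by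
      have hh : (s₂ - s₁ : EuclideanSpace ℝ (Fin 2)) = (t₁ - s₁) - (t₁ - s₂) := by abel
      rw [hh, inner_sub_right, z11, z21, sub_zero]
    have hxv : (inner ℝ x (t₂ - t₁) : ℝ) = 0 := by
      have hh : (t₂ - t₁ : EuclideanSpace ℝ (Fin 2)) = (t₂ - s₁) - (t₁ - s₁) := by abel
      rw [hh, inner_sub_right, z12, z11, sub_zero]
    have hu0 : s₂ - s₁ ≠ 0 := sub_ne_zero.mpr (Ne.symm h12)
    have hli : LinearIndependent ℝ ![s₂ - s₁, t₂ - t₁] := by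
      rw [LinearIndependent.pair_iff]
      intro c d hcd
      by_contra hcon
      rw [not_and_or] at hcon
      have hdne : d ≠ 0 := by
        rcases hcon with h | h
        · intro hd0
          rw [hd0, zero_smul, add_zero, smul_eq_zero] at hcd
          tauto
        · exact h
      exfalso
      set e : ℝ := d⁻¹ * (-c) with he
      have hvv : t₂ - t₁ = e • (s₂ - s₁) := by
        have h1 : d • (t₂ - t₁) = (-c) • (s₂ - s₁) := by
          linear_combination (norm := module) hcd
        rw [he, ← smul_smul, ← h1, smul_smul, inv_mul_cancel₀ hdne, one_smul]
      have hpe : u1 • s₁ + u2 • s₂ = v1 • t₁ + v2 • t₂ := by rw [hueq, hveq]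
      have ht1 : t₁ = s₁ + (u2 - v2*e) • (s₂ - s₁) := by
        have e2 : u1 = 1 - u2 := by linarith
        have e4 : v1 = 1 - v2 := by linarith
        rw [e2, e4] at hpe
        linear_combination (norm := module) - hpe - v2 • hvv
      have hnt1 : ‖s₁ + (u2 - v2*e) • (s₂ - s₁)‖ = ‖s₁‖ := by
        rw [← ht1, ← hn2, ← hn1]
      have hns2 : ‖s₁ + (s₂ - s₁)‖ = ‖s₁‖ := by
        rw [add_sub_cancel, ← hn1]
      rcases collin hu0 hns2 hnt1 with h | h
      · rw [h, zero_smul, add_zero] at ht1; exact h1t1 ht1.symm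
      · rw [h, one_smul, add_sub_cancel] at ht1; exact h2t1 ht1.symm
    have hcard : Fintype.card (Fin 2)
        = Module.finrank ℝ (EuclideanSpace ℝ (Fin 2)) := by simp
    have hb := Module.Basis.span_eq (basisOfLinearIndependentOfCardEqFinrank hli hcard)
    rw [coe_basisOfLinearIndependentOfCardEqFinrank] at hb
    have hrange : Set.range ![s₂ - s₁, t₂ - t₁]
        = ({s₂ - s₁, t₂ - t₁} : Set (EuclideanSpace ℝ (Fin 2))) := by
      simp [Matrix.range_cons, Matrix.range_empty]
      exact Set.pair_comm _ _
    have hx : x ∈ Submodule.span ℝ ({s₂ - s₁, t₂ - t₁} : Set (EuclideanSpace ℝ (Fin 2))) := by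
      rw [← hrange, hb]; trivial
    rw [Submodule.mem_span_pair] at hx
    obtain ⟨c, d, hcd⟩ := hx
    have hxx : (inner ℝ x x : ℝ) = 0 := by
      have h := congrArg (fun y : EuclideanSpace ℝ (Fin 2) => (inner ℝ x y : ℝ)) hcd
      simp only [inner_add_right, real_inner_smul_right] at h
      rw [← h, hxu, hxv]
      ring
    exact inner_self_eq_zero.mp hxx
  · rintro rfl
    simp only [dist_eq_norm, zero_sub, norm_neg]
    exact ⟨le_of_eq (hn1.trans hn2), le_of_eq ((hn1.trans hn2).trans hn3),
      le_of_eq hn2, le_of_eq (hn2.trans hn3)⟩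
end

section
/- Let S = {s₁,s₂} ⊂ T ⊂ ℝ² with |T| = 4. Then V_T(S) is not a triangle (i.e., V_T(S) is not a bounded polyhedron with exactly three vertices and nonempty interior). -/
local notation "E2" => EuclideanSpace ℝ (Fin 2)

open Finset Metric
open scoped Classical
open scoped RealInnerProductSpace

section helpers
variable {F : Type*} [NormedAddCommGroup F] [InnerProductSpace ℝ F]

lemma gdiff (s t x y : F) :
    (dist x s ^ 2 - dist x t ^ 2) - (dist y s ^ 2 - dist y t ^ 2) = 2 * ⟪x - y, t - s⟫ := by
  simp only [dist_eq_norm, norm_sub_sq_real, inner_sub_left, inner_sub_right]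
  ring

lemma gline (s t u w : F) (r : ℝ) :
    dist (AffineMap.lineMap u w r) s ^ 2 - dist (AffineMap.lineMap u w r) t ^ 2
      = (1 - r) * (dist u s ^ 2 - dist u t ^ 2) + r * (dist w s ^ 2 - dist w t ^ 2) := by
  have h1 := gdiff s t (AffineMap.lineMap u w r : F) u
  have h2 := gdiff s t w u
  have hm : (AffineMap.lineMap u w r : F) - u = r • (w - u) := by
    rw [AffineMap.lineMap_apply_module]; module
  rw [hm, real_inner_smul_left] at h1
  linear_combination h1 - r * h2

lemma lin2 {x y l₁ l₂ : ℝ} (h₁ : (1 - l₁) * x + l₁ * y = 0)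
    (h₂ : (1 - l₂) * x + l₂ * y = 0) (h : l₁ ≠ l₂) : x = 0 ∧ y = 0 := by
  have h3 : (l₂ - l₁) * (x - y) = 0 := by linear_combination h₁ - h₂
  rcases mul_eq_zero.mp h3 with h4 | h4
  · exact absurd (by linarith) h
  · have hxy : x = y := by linarith
    have hx : x = 0 := by linear_combination h₁ + l₁ * hxy
    exact ⟨hx, by linarith⟩

end helpers

set_option maxHeartbeats 1000000 in
theorem stmt_18 (T : Finset (EuclideanSpace ℝ (Fin 2)))
    (s₁ s₂ : EuclideanSpace ℝ (Fin 2)) (hne : s₁ ≠ s₂)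
    (hST : ({s₁, s₂} : Finset (EuclideanSpace ℝ (Fin 2))) ⊂ T)
    (hT : T.card = 4) :
    ¬ ∃ a b c : EuclideanSpace ℝ (Fin 2),
        AffineIndependent ℝ ![a, b, c] ∧
        vcell T {s₁, s₂} = convexHull ℝ {a, b, c} := by
  rintro ⟨a, b, c, hind, hhull⟩
  -- extract the two other sites
  have hcs : ({s₁, s₂} : Finset E2).card = 2 := by
    rw [Finset.card_insert_of_notMem (by simp [hne]), Finset.card_singleton]
  have hd : (T \ {s₁, s₂}).card = 2 := by
    rw [Finset.card_sdiff_of_subset hST.subset, hT, hcs]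
  obtain ⟨t₁, t₂, ht12, hTS⟩ := Finset.card_eq_two.mp hd
  have ht₁ : t₁ ≠ s₁ ∧ t₁ ≠ s₂ := by
    have : t₁ ∈ T \ ({s₁, s₂} : Finset E2) := by rw [hTS]; simp
    have := (Finset.mem_sdiff.mp this).2
    simpa using this
  have ht₂ : t₂ ≠ s₁ ∧ t₂ ≠ s₂ := by
    have : t₂ ∈ T \ ({s₁, s₂} : Finset E2) := by rw [hTS]; simp
    have := (Finset.mem_sdiff.mp this).2
    simpa using this
  -- the four constraint functions
  set S' : Fin 2 → E2 := ![s₁, s₂] with hS'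
  set T' : Fin 2 → E2 := ![t₁, t₂] with hT'
  set G : Fin 2 × Fin 2 → E2 → ℝ :=
    fun i x => dist x (S' i.1) ^ 2 - dist x (T' i.2) ^ 2 with hG
  have hiff : ∀ (x s t : E2), dist x s ^ 2 - dist x t ^ 2 ≤ 0 ↔ dist x s ≤ dist x t := by
    intro x s t
    rw [sub_nonpos, pow_le_pow_iff_left₀ dist_nonneg dist_nonneg two_ne_zero]
  have hmem : ∀ x : E2, x ∈ vcell T {s₁, s₂} ↔ ∀ i : Fin 2 × Fin 2, G i x ≤ 0 := by
    intro x
    constructor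
    · intro h i
      obtain ⟨i1, i2⟩ := i
      have hs : S' i1 ∈ ({s₁, s₂} : Finset E2) := by
        fin_cases i1 <;> simp [hS']
      have ht : T' i2 ∈ T \ ({s₁, s₂} : Finset E2) := by
        rw [hTS]; fin_cases i2 <;> simp [hT']
      exact (hiff x _ _).mpr (h _ hs _ ht)
    · intro h s hs t ht
      rw [hTS] at ht
      simp only [Finset.mem_insert, Finset.mem_singleton] at hs ht
      rcases hs with rfl | rfl <;> rcases ht with rfl | rfl
      · exact (hiff x _ _).mp (h (0, 0))
      · exact (hiff x _ _).mp (h (0, 1))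
      · exact (hiff x _ _).mp (h (1, 0))
      · exact (hiff x _ _).mp (h (1, 1))
  have hmem' : ∀ x : E2, x ∈ convexHull ℝ ({a, b, c} : Set E2) → ∀ i, G i x ≤ 0 := by
    intro x hx
    exact (hmem x).mp (by rw [hhull]; exact hx)
  -- affine basis
  have htop : affineSpan ℝ (Set.range ![a, b, c]) = ⊤ := by
    rw [hind.affineSpan_eq_top_iff_card_eq_finrank_add_one]
    simp [finrank_euclideanSpace_fin]
  let B : AffineBasis (Fin 3) ℝ E2 := ⟨![a, b, c], hind, htop⟩
  have hrange : Set.range (B : Fin 3 → E2) = ({a, b, c} : Set E2) := by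
    show Set.range ![a, b, c] = _
    ext x
    simp [Matrix.range_cons, Matrix.range_cons_empty]
    tauto
  -- vertices are in the hull
  have ha_mem : a ∈ convexHull ℝ ({a, b, c} : Set E2) := subset_convexHull ℝ _ (by simp)
  have hb_mem : b ∈ convexHull ℝ ({a, b, c} : Set E2) := subset_convexHull ℝ _ (by simp)
  have hc_mem : c ∈ convexHull ℝ ({a, b, c} : Set E2) := subset_convexHull ℝ _ (by simp)
  -- nondegenerate gradients
  have hstne : ∀ i : Fin 2 × Fin 2, T' i.2 - S' i.1 ≠ 0 := by
    intro i
    rw [sub_ne_zero]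
    obtain ⟨i1, i2⟩ := i
    fin_cases i1 <;> fin_cases i2 <;>
      simp [hS', hT', ht₁.1, ht₁.2, ht₂.1, ht₂.2]
  -- no G can vanish at all three vertices
  have triple : ∀ i : Fin 2 × Fin 2, G i a = 0 → G i b = 0 → G i c = 0 → False := by
    intro i ha hb hc
    simp only [hG] at ha hb hc
    have h1 : ⟪b - a, T' i.2 - S' i.1⟫ = 0 := by
      have := gdiff (S' i.1) (T' i.2) b a
      rw [ha, hb] at this
      linarith
    have h2 : ⟪c - a, T' i.2 - S' i.1⟫ = 0 := by
      have := gdiff (S' i.1) (T' i.2) c a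
      rw [ha, hc] at this
      linarith
    have hli0 := (affineIndependent_iff_linearIndependent_vsub ℝ ![a, b, c] 0).mp hind
    let e : Fin 2 → {x : Fin 3 // x ≠ 0} := ![⟨1, by decide⟩, ⟨2, by decide⟩]
    have hei : Function.Injective e := by
      intro x y hxy
      fin_cases x <;> fin_cases y <;> simp_all [e]
    have hli1 := hli0.comp e hei
    have heq : ((fun i : {x : Fin 3 // x ≠ 0} => (![a, b, c] (i : Fin 3) -ᵥ ![a, b, c] 0 : E2)) ∘ e)
        = ![b - a, c - a] := by
      funext j
      fin_cases j <;> simp [e, vsub_eq_sub]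
    rw [heq] at hli1
    have hspan : Submodule.span ℝ (Set.range ![b - a, c - a]) = ⊤ :=
      hli1.span_eq_top_of_card_eq_finrank (by simp [finrank_euclideanSpace_fin])
    have hv : T' i.2 - S' i.1 ∈ Submodule.span ℝ ({b - a, c - a} : Set E2) := by
      have : Set.range ![b - a, c - a] = ({b - a, c - a} : Set E2) := by
        ext x
        simp [Matrix.range_cons, Matrix.range_cons_empty]
        tauto
      rw [← this, hspan]
      trivial
    obtain ⟨α, β, hαβ⟩ := Submodule.mem_span_pair.mp hv
    have hz : ⟪T' i.2 - S' i.1, T' i.2 - S' i.1⟫ = 0 := by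
      nth_rewrite 1 [← hαβ]
      rw [inner_add_left, real_inner_smul_left, real_inner_smul_left, h1, h2]
      ring
    exact hstne i (inner_self_eq_zero.mp hz)
  -- edge lemma
  have edge : ∀ (u w : E2) (k : Fin 3), u ∈ convexHull ℝ ({a, b, c} : Set E2) →
      w ∈ convexHull ℝ ({a, b, c} : Set E2) → B.coord k u = 0 → B.coord k w = 0 →
      ∃ i : Fin 2 × Fin 2, G i u = 0 ∧ G i w = 0 := by
    intro u w k hu hw hcu hcw
    set lam : Fin 5 → ℝ := fun j => ((j : ℕ) + 1) / 6 with hlam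
    set mp : Fin 5 → E2 := fun j => AffineMap.lineMap u w (lam j) with hmp
    have hmpmem : ∀ j, mp j ∈ convexHull ℝ ({a, b, c} : Set E2) := by
      intro j
      have hj4 : ((j : ℕ) : ℝ) ≤ 4 := by exact_mod_cast Nat.le_of_lt_succ j.isLt
      have hlj : lam j = (((j : ℕ) : ℝ) + 1) / 6 := rfl
      have h01 : lam j ∈ Set.Icc (0 : ℝ) 1 := by
        constructor
        · rw [hlj]; positivity
        · rw [hlj, div_le_one (by norm_num)]
          linarith
      have hseg : mp j ∈ segment ℝ u w := by
        rw [segment_eq_image_lineMap]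
        exact ⟨lam j, h01, rfl⟩
      exact (convex_convexHull ℝ _).segment_subset hu hw hseg
    have hzero : ∀ j, ∃ i, G i (mp j) = 0 := by
      by_contra hcon
      push_neg at hcon
      obtain ⟨j, hj⟩ := hcon
      have hlt : ∀ i, G i (mp j) < 0 := fun i => lt_of_le_of_ne (hmem' _ (hmpmem j) i) (hj i)
      have hUopen : IsOpen {x : E2 | ∀ i, G i x < 0} := by
        have hU : {x : E2 | ∀ i : Fin 2 × Fin 2, G i x < 0}
            = ⋂ i : Fin 2 × Fin 2, {x | G i x < 0} := by
          ext x
          simp [Set.mem_iInter]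
        rw [hU]
        refine isOpen_iInter_of_finite fun i => ?_
        have hcont : Continuous (G i) := by
          simp only [hG]
          fun_prop
        exact isOpen_lt hcont continuous_const
      have hUsub : {x : E2 | ∀ i, G i x < 0} ⊆ convexHull ℝ ({a, b, c} : Set E2) := by
        intro x hx
        rw [← hhull]
        exact (hmem x).mpr fun i => le_of_lt (hx i)
      have hint : mp j ∈ interior (convexHull ℝ ({a, b, c} : Set E2)) :=
        interior_maximal hUsub hUopen hlt
      rw [← hrange, B.interior_convexHull] at hint
      simp only [Set.mem_setOf_eq] at hint
      have hk := hint k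
      have hzero' : B.coord k (mp j) = 0 := by
        have happ : B.coord k (mp j)
            = AffineMap.lineMap (B.coord k u) (B.coord k w) (lam j) :=
          AffineMap.apply_lineMap _ _ _ _
        rw [happ, hcu, hcw]
        simp
      linarith
    choose F hF using hzero
    obtain ⟨j, j', hjj', hFF⟩ := Fintype.exists_ne_map_eq_of_card_lt F (by simp)
    have h1 : (1 - lam j) * G (F j) u + lam j * G (F j) w = 0 := by
      have h := hF j
      simp only [hG, hmp] at h ⊢
      rw [gline] at h
      exact h
    have h2 : (1 - lam j') * G (F j) u + lam j' * G (F j) w = 0 := by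
      have h := hF j'
      rw [← hFF] at h
      simp only [hG, hmp] at h ⊢
      rw [gline] at h
      exact h
    have hne' : lam j ≠ lam j' := by
      intro hh
      have hh' : (((j : ℕ) : ℝ) + 1) / 6 = (((j' : ℕ) : ℝ) + 1) / 6 := hh
      have hr : ((j : ℕ) : ℝ) = ((j' : ℕ) : ℝ) := by linarith
      exact hjj' (Fin.ext (Nat.cast_injective hr))
    obtain ⟨hu0, hw0⟩ := lin2 h1 h2 hne'
    exact ⟨F j, hu0, hw0⟩
  -- barycentric coordinates vanish on opposite edges
  have hcoord : ∀ k j : Fin 3, k ≠ j → B.coord k (![a, b, c] j) = 0 := by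
    intro k j hkj
    have h := B.coord_apply k j
    rw [if_neg hkj] at h
    exact h
  obtain ⟨i1, h1a, h1b⟩ := edge a b 2 ha_mem hb_mem
    (hcoord 2 0 (by decide)) (hcoord 2 1 (by decide))
  obtain ⟨i2, h2b, h2c⟩ := edge b c 0 hb_mem hc_mem
    (hcoord 0 1 (by decide)) (hcoord 0 2 (by decide))
  obtain ⟨i3, h3c, h3a⟩ := edge c a 1 hc_mem ha_mem
    (hcoord 1 2 (by decide)) (hcoord 1 0 (by decide))
  have d12 : i1 ≠ i2 := fun h => triple i1 h1a h1b (h ▸ h2c)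
  have d23 : i2 ≠ i3 := fun h => triple i2 (h ▸ h3a) h2b h2c
  have d13 : i1 ≠ i3 := fun h => triple i1 h1a h1b (h ▸ h3c)
  have hdiag : ∀ p q : Fin 2 × Fin 2, p.1 ≠ q.1 → p.2 ≠ q.2 →
      ((p = (0, 0) ∧ q = (1, 1)) ∨ (p = (1, 1) ∧ q = (0, 0)) ∨
        (p = (0, 1) ∧ q = (1, 0)) ∨ (p = (1, 0) ∧ q = (0, 1))) := by decide
  have hid : ∀ x : E2, G (0, 0) x + G (1, 1) x = G (0, 1) x + G (1, 0) x := by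
    intro x
    simp only [hG]
    ring
  have allz : ∀ v : E2, v ∈ convexHull ℝ ({a, b, c} : Set E2) →
      ∀ p q : Fin 2 × Fin 2, p.1 ≠ q.1 → p.2 ≠ q.2 → G p v = 0 → G q v = 0 →
      ∀ i : Fin 2 × Fin 2, G i v = 0 := by
    intro v hv p q hp1 hp2 hp hq i
    have hle := hmem' v hv
    have h00 := hle (0, 0)
    have h01 := hle (0, 1)
    have h10 := hle (1, 0)
    have h11 := hle (1, 1)
    have hidv := hid v
    have hi4 : i = (0, 0) ∨ i = (0, 1) ∨ i = (1, 0) ∨ i = (1, 1) := by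
      obtain ⟨x, y⟩ := i
      fin_cases x <;> fin_cases y <;> simp
    rcases hdiag p q hp1 hp2 with ⟨rfl, rfl⟩ | ⟨rfl, rfl⟩ | ⟨rfl, rfl⟩ | ⟨rfl, rfl⟩ <;>
      rcases hi4 with rfl | rfl | rfl | rfl <;> linarith
  have hdec3 : ∀ p q r : Fin 2 × Fin 2, p ≠ q → q ≠ r → p ≠ r →
      ((p.1 ≠ q.1 ∧ p.2 ≠ q.2) ∨ (q.1 ≠ r.1 ∧ q.2 ≠ r.2) ∨ (p.1 ≠ r.1 ∧ p.2 ≠ r.2)) := by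
    decide
  rcases hdec3 i1 i2 i3 d12 d23 d13 with ⟨e1, e2⟩ | ⟨e1, e2⟩ | ⟨e1, e2⟩
  · exact triple i3 h3a (allz b hb_mem i1 i2 e1 e2 h1b h2b i3) h3c
  · exact triple i1 h1a h1b (allz c hc_mem i2 i3 e1 e2 h2c h3c i1)
  · exact triple i2 (allz a ha_mem i1 i3 e1 e2 h1a h3a i2) h2b h2c
end

section
/- Let F = {x ∈ ℝⁿ : ⟨d,x⟩ ≤ γ} be a closed halfspace with ‖d‖ = 1. Then for any integers τ > σ ≥ 1 there exist finite sets S ⊂ T ⊂ ℝⁿ with |S| = σ and |T| = τ such that V_T(S) = F. -/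
/-! All sites lie on the line `ℝ • d`. For sites `a • d`, `b • d` with `a < b`, the bisector
inequality `dist x (a • d) ≤ dist x (b • d)` is the halfspace `⟪d, x⟫ ≤ (a + b) / 2`, so a cell
with sites `A • d` and `B • d` (every `a ∈ A` below every `b ∈ B`) is the halfspace cut out by the
smallest midpoint `(min A + min B) / 2`. Taking `A = {γ - σ, …, γ - 1}` and
`B = {γ + σ, …, γ + τ - 1}` makes that midpoint `γ`. -/

open Finset Metric
open scoped Classical

lemma dist_smul_le_dist_smul_iff {E : Type*} [NormedAddCommGroup E] [InnerProductSpace ℝ E]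
    {d : E} (hd : ‖d‖ = 1) (x : E) {a b : ℝ} (hab : a < b) :
    dist x (a • d) ≤ dist x (b • d) ↔ inner ℝ d x ≤ (a + b) / 2 := by
  have key : dist x (b • d) ^ 2 - dist x (a • d) ^ 2 = (b - a) * (a + b - 2 * inner ℝ d x) := by
    rw [dist_eq_norm, dist_eq_norm, norm_sub_sq_real, norm_sub_sq_real, inner_smul_right,
      inner_smul_right, norm_smul, norm_smul, hd, real_inner_comm]
    simp only [Real.norm_eq_abs, mul_one, sq_abs]
    ring
  rw [← sq_le_sq₀ dist_nonneg dist_nonneg, ← sub_nonneg, key,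
    mul_nonneg_iff_of_pos_left (sub_pos.2 hab)]
  constructor <;> intro <;> linarith

lemma vcell_image_smul {n : ℕ} {d : EuclideanSpace ℝ (Fin n)} (hd : ‖d‖ = 1) {A B : Finset ℝ}
    (hAB : ∀ a ∈ A, ∀ b ∈ B, a < b) :
    vcell ((A ∪ B).image (· • d)) (A.image (· • d)) =
      {x | ∀ a ∈ A, ∀ b ∈ B, inner ℝ d x ≤ (a + b) / 2} := by
  have hinj : Function.Injective (· • d : ℝ → _) :=
    smul_left_injective ℝ (norm_ne_zero_iff.mp (by simp [hd]))
  have hdisj : Disjoint A B := Finset.disjoint_left.2 fun a ha hb => (hAB a ha a hb).false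
  ext x
  simp only [vcell, ← image_sdiff _ _ hinj, union_sdiff_cancel_left hdisj, forall_mem_image,
    Set.mem_ofPred_eq]
  exact forall₂_congr fun a ha => forall₂_congr fun b hb =>
    dist_smul_le_dist_smul_iff hd x (hAB a ha b hb)

lemma exists_finsets_forall_le_midpoint_iff (γ : ℝ) {p q : ℕ} (hp : 0 < p) (hq : 0 < q) :
    ∃ A B : Finset ℝ, A.card = p ∧ B.card = q ∧ (∀ a ∈ A, ∀ b ∈ B, a < b) ∧
      ∀ y, (∀ a ∈ A, ∀ b ∈ B, y ≤ (a + b) / 2) ↔ y ≤ γ := by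
  refine ⟨(range p).image fun k : ℕ => γ - p + k, (range q).image fun j : ℕ => γ + p + j,
    ?_, ?_, ?_, fun y => ?_⟩
  · rw [card_image_of_injective _ fun a b h => by simpa using h, card_range]
  · rw [card_image_of_injective _ fun a b h => by simpa using h, card_range]
  · simp only [forall_mem_image, mem_range]
    intro k hk j _
    have : (k : ℝ) < p := by exact_mod_cast hk
    linarith [(j.cast_nonneg : (0 : ℝ) ≤ j)]
  · simp only [forall_mem_image, mem_range]
    refine ⟨fun h => by simpa using h hp hq, fun h k _ j _ => ?_⟩
    linarith [(k.cast_nonneg : (0 : ℝ) ≤ k), (j.cast_nonneg : (0 : ℝ) ≤ j)]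

theorem stmt_19 {n : ℕ} (d : EuclideanSpace ℝ (Fin n)) (hd : ‖d‖ = 1)
    (γ : ℝ) (σ τ : ℕ) (hσ : 1 ≤ σ) (hστ : σ < τ) :
    ∃ S T : Finset (EuclideanSpace ℝ (Fin n)),
      S ⊂ T ∧ S.card = σ ∧ T.card = τ ∧
      vcell T S = {x : EuclideanSpace ℝ (Fin n) | inner ℝ d x ≤ γ} := by
  obtain ⟨A, B, hA, hB, hAB, hmid⟩ :=
    exists_finsets_forall_le_midpoint_iff γ (p := σ) (q := τ - σ) (by omega) (by omega)
  have hinj : Function.Injective (· • d : ℝ → _) :=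
    smul_left_injective ℝ (norm_ne_zero_iff.mp (by simp [hd]))
  have hdisj : Disjoint A B := Finset.disjoint_left.2 fun a ha hb => (hAB a ha a hb).false
  have hS : (A.image (· • d)).card = σ := by rw [card_image_of_injective _ hinj, hA]
  have hT : ((A ∪ B).image (· • d)).card = τ := by
    rw [card_image_of_injective _ hinj, card_union_of_disjoint hdisj, hA, hB]
    omega
  refine ⟨A.image (· • d), (A ∪ B).image (· • d), ?_, hS, hT, ?_⟩
  · exact ssubset_of_subset_of_ne (image_subset_image subset_union_left) fun h => by
      rw [h, hT] at hS
      omega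
  · rw [vcell_image_smul hd hAB]
    exact Set.ext fun x => hmid _
end
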